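/- arXiv:2406.05020 — 5 statements merged into one kernel-verified Lean document; each statement's English description precedes it below -/
import Mathlib

section
/- Let d ∈ ℕ, let K : Fin d → (ℝ → ℝ → ℝ) be a family of functions whose uncurried versions (ℝ × ℝ → ℝ) are each ContDiff ℝ ⊤, let m, m' : Fin d → ℕ be multi-indices with n = ∑ i, (m i + m' i), and define F : EuclideanSpace ℝ (Fin d) × EuclideanSpace ℝ (Fin d) → ℝ by F (x, y) = ∏ i, K i (x i) (y i). Let v : Fin n → EuclideanSpace ℝ (Fin d) × EuclideanSpace ℝ (Fin d) be any tuple of vectors in which, for each i, the vector (eᵢ, 0) occurs exactly m i times and (0, eᵢ) occurs exactly m' i times, where eᵢ = EuclideanSpace.single i 1. Then for all x, y: iteratedFDeriv ℝ n F (x, y) v = ∏ i, iteratedDeriv (m i) (fun s => iteratedDeriv (m' i) (K i s) (y i)) (x i). -/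
open Finset

section Helpers

lemma hasDerivAt_fst_var (G : ℝ × ℝ → ℝ) (hG : Differentiable ℝ G) (s t : ℝ) :
    HasDerivAt (fun u => G (u, t)) (fderiv ℝ G (s, t) (1, 0)) s := by
  have h1 : HasDerivAt (fun u : ℝ => (u, t)) ((1 : ℝ), (0 : ℝ)) s :=
    (hasDerivAt_id s).prodMk (hasDerivAt_const s t)
  exact (hG (s, t)).hasFDerivAt.comp_hasDerivAt s h1

lemma hasDerivAt_snd_var (G : ℝ × ℝ → ℝ) (hG : Differentiable ℝ G) (s t : ℝ) :
    HasDerivAt (fun u => G (s, u)) (fderiv ℝ G (s, t) (0, 1)) t := by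
  have h1 : HasDerivAt (fun u : ℝ => (s, u)) ((0 : ℝ), (1 : ℝ)) t :=
    (hasDerivAt_const t s).prodMk (hasDerivAt_id t)
  exact (hG (s, t)).hasFDerivAt.comp_hasDerivAt t h1

lemma fderiv_fderiv_apply' (G : ℝ × ℝ → ℝ) (hG : ContDiff ℝ (⊤ : ℕ∞) G) (q : ℝ × ℝ) (w w' : ℝ × ℝ) :
    fderiv ℝ (fun p => fderiv ℝ G p w) q w' = fderiv ℝ (fderiv ℝ G) q w' w := by
  have hd : DifferentiableAt ℝ (fderiv ℝ G) q :=
    ((hG.fderiv_right (m := (⊤ : ℕ∞)) (by simp)).differentiable (by simp)) q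
  rw [fderiv_clm_apply hd (differentiableAt_const w)]
  simp

lemma clairaut' (G : ℝ × ℝ → ℝ) (hG : ContDiff ℝ (⊤ : ℕ∞) G) (s t : ℝ) :
    deriv (fun u => deriv (fun r => G (u, r)) t) s
      = deriv (fun r => deriv (fun u => G (u, r)) s) t := by
  have hdiff : Differentiable ℝ G := hG.differentiable (by simp)
  have hP1 : ContDiff ℝ (⊤ : ℕ∞) (fun p => fderiv ℝ G p (1, 0)) :=
    (hG.fderiv_right (by simp)).clm_apply contDiff_const
  have hP2 : ContDiff ℝ (⊤ : ℕ∞) (fun p => fderiv ℝ G p (0, 1)) :=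
    (hG.fderiv_right (by simp)).clm_apply contDiff_const
  have e1 : (fun u => deriv (fun r => G (u, r)) t) = fun u => fderiv ℝ G (u, t) (0, 1) := by
    funext u
    exact (hasDerivAt_snd_var G hdiff u t).deriv
  have e2 : (fun r => deriv (fun u => G (u, r)) s) = fun r => fderiv ℝ G (s, r) (1, 0) := by
    funext r
    exact (hasDerivAt_fst_var G hdiff s r).deriv
  rw [e1, e2,
    (hasDerivAt_fst_var _ (hP2.differentiable (by simp)) s t).deriv,
    (hasDerivAt_snd_var _ (hP1.differentiable (by simp)) s t).deriv,
    fderiv_fderiv_apply' G hG _ _ _, fderiv_fderiv_apply' G hG _ _ _]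
  exact (hG.contDiffAt.isSymmSndFDerivAt (by rw [minSmoothness_of_isRCLikeNormedField]; exact WithTop.coe_le_coe.mpr (le_top : (2 : ℕ∞) ≤ ⊤))).eq _ _

lemma contDiff_uncurry_deriv_snd (g : ℝ → ℝ → ℝ) (hg : ContDiff ℝ (⊤ : ℕ∞) (Function.uncurry g)) :
    ContDiff ℝ (⊤ : ℕ∞) (Function.uncurry (fun u t => deriv (g u) t)) := by
  have e : Function.uncurry (fun u t => deriv (g u) t)
      = fun p => fderiv ℝ (Function.uncurry g) p (0, 1) := by
    funext p
    exact (hasDerivAt_snd_var _ (hg.differentiable (by simp)) p.1 p.2).deriv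
  rw [e]
  exact (hg.fderiv_right (by simp)).clm_apply contDiff_const

lemma contDiff_uncurry_deriv_fst (g : ℝ → ℝ → ℝ) (hg : ContDiff ℝ (⊤ : ℕ∞) (Function.uncurry g)) :
    ContDiff ℝ (⊤ : ℕ∞) (Function.uncurry (fun s t => deriv (fun u => g u t) s)) := by
  have e : Function.uncurry (fun s t => deriv (fun u => g u t) s)
      = fun p => fderiv ℝ (Function.uncurry g) p (1, 0) := by
    funext p
    exact (hasDerivAt_fst_var _ (hg.differentiable (by simp)) p.1 p.2).deriv
  rw [e]
  exact (hg.fderiv_right (by simp)).clm_apply contDiff_const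

lemma swap_deriv_iteratedDeriv (k : ℕ) :
    ∀ (g : ℝ → ℝ → ℝ), ContDiff ℝ (⊤ : ℕ∞) (Function.uncurry g) → ∀ (b s : ℝ),
    deriv (fun u => iteratedDeriv k (g u) b) s
      = iteratedDeriv k (fun t => deriv (fun u => g u t) s) b := by
  induction k with
  | zero => intro g hg b s; simp [iteratedDeriv_zero]
  | succ k IH =>
    intro g hg b s
    have hh := contDiff_uncurry_deriv_snd g hg
    have step := IH (fun u t => deriv (g u) t) hh b s
    simp only [iteratedDeriv_succ']
    have e1 : (fun u => iteratedDeriv k (deriv (g u)) b)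
        = fun u => iteratedDeriv k ((fun u t => deriv (g u) t) u) b := rfl
    rw [e1, step]
    congr 1
    funext t
    have := clairaut' (Function.uncurry g) hg s t
    simpa [Function.uncurry] using this

section Euclid

variable {d : ℕ}

noncomputable abbrev tensorLi (d : ℕ) (i : Fin d) :
    (EuclideanSpace ℝ (Fin d) × EuclideanSpace ℝ (Fin d)) →L[ℝ] ℝ × ℝ :=
  ((EuclideanSpace.proj i).comp (ContinuousLinearMap.fst ℝ _ _)).prod
    ((EuclideanSpace.proj i).comp (ContinuousLinearMap.snd ℝ _ _))

lemma tensorF_contDiff (K : Fin d → ℝ → ℝ → ℝ)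
    (hK : ∀ i, ContDiff ℝ (⊤ : ℕ∞) (Function.uncurry (K i))) :
    ContDiff ℝ (⊤ : ℕ∞) (fun p : EuclideanSpace ℝ (Fin d) × EuclideanSpace ℝ (Fin d) =>
      ∏ i, K i (p.1 i) (p.2 i)) :=
  contDiff_prod fun i _ => (hK i).comp (tensorLi d i).contDiff

lemma factor_hasFDerivAt (K : Fin d → ℝ → ℝ → ℝ)
    (hK : ∀ i, ContDiff ℝ (⊤ : ℕ∞) (Function.uncurry (K i))) (i : Fin d)
    (p : EuclideanSpace ℝ (Fin d) × EuclideanSpace ℝ (Fin d)) :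
    HasFDerivAt (fun q : EuclideanSpace ℝ (Fin d) × EuclideanSpace ℝ (Fin d) =>
        K i (q.1 i) (q.2 i))
      ((fderiv ℝ (Function.uncurry (K i)) (p.1 i, p.2 i)).comp (tensorLi d i)) p :=
  HasFDerivAt.comp (g := Function.uncurry (K i)) p (((hK i).differentiable (by simp)) (p.1 i, p.2 i)).hasFDerivAt (tensorLi d i).hasFDerivAt

open scoped Classical in
lemma tensorF_fderiv_apply (K : Fin d → ℝ → ℝ → ℝ)
    (hK : ∀ i, ContDiff ℝ (⊤ : ℕ∞) (Function.uncurry (K i)))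
    (p : EuclideanSpace ℝ (Fin d) × EuclideanSpace ℝ (Fin d))
    (w : EuclideanSpace ℝ (Fin d) × EuclideanSpace ℝ (Fin d)) :
    fderiv ℝ (fun q : EuclideanSpace ℝ (Fin d) × EuclideanSpace ℝ (Fin d) =>
        ∏ i, K i (q.1 i) (q.2 i)) p w
      = ∑ i, (∏ j ∈ univ.erase i, K j (p.1 j) (p.2 j)) *
          fderiv ℝ (Function.uncurry (K i)) (p.1 i, p.2 i) (w.1 i, w.2 i) := by
  have h := HasFDerivAt.finset_prod (u := univ)
    (g := fun i (q : EuclideanSpace ℝ (Fin d) × EuclideanSpace ℝ (Fin d)) => K i (q.1 i) (q.2 i))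
    (g' := fun i => (fderiv ℝ (Function.uncurry (K i)) (p.1 i, p.2 i)).comp (tensorLi d i))
    (fun i _ => factor_hasFDerivAt K hK i p)
  rw [h.fderiv]
  simp [smul_eq_mul, Function.uncurry]

open scoped Classical in
lemma peel_fst (K : Fin d → ℝ → ℝ → ℝ)
    (hK : ∀ i, ContDiff ℝ (⊤ : ℕ∞) (Function.uncurry (K i))) (j : Fin d) :
    (fun p : EuclideanSpace ℝ (Fin d) × EuclideanSpace ℝ (Fin d) =>
        fderiv ℝ (fun q : EuclideanSpace ℝ (Fin d) × EuclideanSpace ℝ (Fin d) =>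
          ∏ i, K i (q.1 i) (q.2 i)) p (EuclideanSpace.single j 1, 0))
      = fun p => ∏ i, (Function.update K j (fun s t => deriv (fun u => K j u t) s)) i
          (p.1 i) (p.2 i) := by
  funext p
  rw [tensorF_fderiv_apply K hK p _]
  rw [Finset.sum_eq_single j]
  · rw [← Finset.mul_prod_erase univ _ (mem_univ j)]
    rw [Function.update_self]
    have hd : deriv (fun u => K j u (p.2 j)) (p.1 j)
        = fderiv ℝ (Function.uncurry (K j)) (p.1 j, p.2 j) (1, 0) :=
      (hasDerivAt_fst_var _ ((hK j).differentiable (by simp)) _ _).deriv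
    have hval : ((EuclideanSpace.single j (1:ℝ) : EuclideanSpace ℝ (Fin d)) j,
        (0 : EuclideanSpace ℝ (Fin d)) j) = ((1:ℝ), (0:ℝ)) := by
      simp [EuclideanSpace.single_apply]
    rw [hval, ← hd, mul_comm]
    congr 1
    exact Finset.prod_congr rfl fun i hi => by
      rw [Function.update_of_ne (Finset.mem_erase.mp hi).1]
  · intro i _ hij
    have hval : ((EuclideanSpace.single j (1:ℝ) : EuclideanSpace ℝ (Fin d)) i,
        (0 : EuclideanSpace ℝ (Fin d)) i) = ((0:ℝ), (0:ℝ)) := by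
      simp [EuclideanSpace.single_apply, hij]
    rw [hval]
    rw [show ((0:ℝ), (0:ℝ)) = 0 from rfl, map_zero, mul_zero]
  · intro h; exact absurd (mem_univ j) h

open scoped Classical in
lemma peel_snd (K : Fin d → ℝ → ℝ → ℝ)
    (hK : ∀ i, ContDiff ℝ (⊤ : ℕ∞) (Function.uncurry (K i))) (j : Fin d) :
    (fun p : EuclideanSpace ℝ (Fin d) × EuclideanSpace ℝ (Fin d) =>
        fderiv ℝ (fun q : EuclideanSpace ℝ (Fin d) × EuclideanSpace ℝ (Fin d) =>
          ∏ i, K i (q.1 i) (q.2 i)) p (0, EuclideanSpace.single j 1))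
      = fun p => ∏ i, (Function.update K j (fun s t => deriv (K j s) t)) i
          (p.1 i) (p.2 i) := by
  funext p
  rw [tensorF_fderiv_apply K hK p _]
  rw [Finset.sum_eq_single j]
  · rw [← Finset.mul_prod_erase univ _ (mem_univ j)]
    rw [Function.update_self]
    have hd : deriv (K j (p.1 j)) (p.2 j)
        = fderiv ℝ (Function.uncurry (K j)) (p.1 j, p.2 j) (0, 1) :=
      (hasDerivAt_snd_var _ ((hK j).differentiable (by simp)) _ _).deriv
    have hval : (((0 : EuclideanSpace ℝ (Fin d)) j),
        ((EuclideanSpace.single j (1:ℝ) : EuclideanSpace ℝ (Fin d)) j)) = ((0:ℝ), (1:ℝ)) := by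
      simp [EuclideanSpace.single_apply]
    rw [hval, ← hd, mul_comm]
    congr 1
    exact Finset.prod_congr rfl fun i hi => by
      rw [Function.update_of_ne (Finset.mem_erase.mp hi).1]
  · intro i _ hij
    have hval : (((0 : EuclideanSpace ℝ (Fin d)) i),
        ((EuclideanSpace.single j (1:ℝ) : EuclideanSpace ℝ (Fin d)) i)) = ((0:ℝ), (0:ℝ)) := by
      simp [EuclideanSpace.single_apply, hij]
    rw [hval]
    rw [show ((0:ℝ), (0:ℝ)) = 0 from rfl, map_zero, mul_zero]
  · intro h; exact absurd (mem_univ j) h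

end Euclid

variable {E' : Type*} [NormedAddCommGroup E'] [NormedSpace ℝ E']

lemma iteratedFDeriv_fixed_dir (F : E' → ℝ) (hF : ContDiff ℝ (⊤ : ℕ∞) F) (n : ℕ) (x : E')
    (v : Fin (n + 1) → E') :
    iteratedFDeriv ℝ (n + 1) F x v
      = iteratedFDeriv ℝ n (fun p => fderiv ℝ F p (v (Fin.last n))) x (Fin.init v) := by
  rw [iteratedFDeriv_succ_apply_right]
  have h := (ContinuousLinearMap.apply ℝ ℝ (v (Fin.last n))).iteratedFDeriv_comp_left
    (f := fderiv ℝ F) (hF.fderiv_right (m := (⊤ : ℕ∞)) (by simp)).contDiffAt (x := x) (i := n) (by exact_mod_cast le_top)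
  have e : (fun p => fderiv ℝ F p (v (Fin.last n)))
      = (ContinuousLinearMap.apply ℝ ℝ (v (Fin.last n))) ∘ (fderiv ℝ F) := rfl
  rw [e, h]
  rfl

lemma count_init {n : ℕ} {α : Type*} (v : Fin (n + 1) → α) (a : α)
    [DecidablePred fun k : Fin (n + 1) => v k = a]
    [DecidablePred fun k : Fin n => Fin.init v k = a]
    [Decidable (v (Fin.last n) = a)] :
    (univ.filter fun k => v k = a).card
      = (univ.filter fun k : Fin n => Fin.init v k = a).card
        + if v (Fin.last n) = a then 1 else 0 := by
  classical
  rw [Fin.univ_castSuccEmb, filter_cons, apply_ite Finset.card, card_cons, filter_map, card_map]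
  have : (univ.filter ((fun k => v k = a) ∘ ⇑Fin.castSuccEmb))
      = (univ.filter fun k : Fin n => Fin.init v k = a) :=
    Finset.filter_congr fun k _ => Iff.rfl
  rw [this]
  split <;> omega

lemma single_ne_zero' {d : ℕ} (i : Fin d) :
    (EuclideanSpace.single i (1:ℝ) : EuclideanSpace ℝ (Fin d)) ≠ 0 := by
  intro h
  have := congrArg (fun f : EuclideanSpace ℝ (Fin d) => f i) h
  simp [EuclideanSpace.single_apply] at this

lemma single_injective' {d : ℕ} {i j : Fin d} (h : i ≠ j) :
    (EuclideanSpace.single i (1:ℝ) : EuclideanSpace ℝ (Fin d))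
      ≠ EuclideanSpace.single j 1 := by
  intro he
  have := congrArg (fun f : EuclideanSpace ℝ (Fin d) => f i) he
  simp [EuclideanSpace.single_apply, h] at this

open scoped Classical in
lemma classify {d n : ℕ} (m m' : Fin d → ℕ) (hn : n = ∑ i, (m i + m' i))
    (v : Fin n → EuclideanSpace ℝ (Fin d) × EuclideanSpace ℝ (Fin d))
    (hv1 : ∀ i, (Finset.univ.filter fun k =>
      v k = (EuclideanSpace.single i 1, 0)).card = m i)
    (hv2 : ∀ i, (Finset.univ.filter fun k =>
      v k = (0, EuclideanSpace.single i 1)).card = m' i)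
    (k : Fin n) :
    ∃ j, v k = (EuclideanSpace.single j 1, 0) ∨ v k = (0, EuclideanSpace.single j 1) := by
  set A : Fin d → Finset (Fin n) := fun i => univ.filter fun k =>
    v k = (EuclideanSpace.single i 1, 0) with hA
  set B : Fin d → Finset (Fin n) := fun i => univ.filter fun k =>
    v k = (0, EuclideanSpace.single i 1) with hB
  have hABd : ∀ i, Disjoint (A i) (B i) := by
    intro i
    rw [Finset.disjoint_left]
    intro k hk hk'
    simp only [hA, hB, mem_filter] at hk hk'
    have : (EuclideanSpace.single i (1:ℝ) : EuclideanSpace ℝ (Fin d)) = 0 := by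
      have := hk.2.symm.trans hk'.2
      exact congrArg Prod.fst this
    exact single_ne_zero' i this
  have hdisj : ((univ : Finset (Fin d)) : Set (Fin d)).PairwiseDisjoint fun i => A i ∪ B i := by
    intro i _ j _ hij
    rw [Function.onFun, Finset.disjoint_left]
    intro k hk hk'
    simp only [hA, hB, Finset.mem_union, mem_filter] at hk hk'
    rcases hk with ⟨_, h1⟩ | ⟨_, h1⟩ <;> rcases hk' with ⟨_, h2⟩ | ⟨_, h2⟩
    · exact single_injective' hij (congrArg Prod.fst (h1.symm.trans h2))
    · exact single_ne_zero' i (congrArg Prod.fst (h1.symm.trans h2))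
    · exact single_ne_zero' j (congrArg Prod.fst (h2.symm.trans h1))
    · exact single_injective' hij (congrArg Prod.snd (h1.symm.trans h2))
  have hcard : (univ.biUnion fun i => A i ∪ B i).card = n := by
    rw [Finset.card_biUnion hdisj]
    calc ∑ i, (A i ∪ B i).card = ∑ i, (m i + m' i) := by
          refine Finset.sum_congr rfl fun i _ => ?_
          rw [Finset.card_union_of_disjoint (hABd i), hv1 i, hv2 i]
      _ = n := hn.symm
  have huniv : (univ.biUnion fun i => A i ∪ B i) = univ :=
    Finset.eq_univ_of_card _ (by simpa using hcard)
  have hk : k ∈ univ.biUnion fun i => A i ∪ B i := huniv ▸ mem_univ k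
  simp only [Finset.mem_biUnion, Finset.mem_union, hA, hB, mem_filter, true_and,
    mem_univ] at hk
  obtain ⟨j, hj⟩ := hk
  exact ⟨j, hj⟩

end Helpers

open scoped Classical in
/-- Mixed partial derivatives with respect to both arguments of a tensor product covariance
function distribute to the individual one-dimensional covariance functions (Equation (16)
of the paper). -/
theorem iteratedFDeriv_tensorProduct_two_args (d n : ℕ) (K : Fin d → ℝ → ℝ → ℝ)
    (hK : ∀ i, ContDiff ℝ (⊤ : ℕ∞) (Function.uncurry (K i)))
    (m m' : Fin d → ℕ) (hn : n = ∑ i, (m i + m' i))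
    (v : Fin n → EuclideanSpace ℝ (Fin d) × EuclideanSpace ℝ (Fin d))
    (hv1 : ∀ i, (Finset.univ.filter fun k =>
      v k = (EuclideanSpace.single i 1, 0)).card = m i)
    (hv2 : ∀ i, (Finset.univ.filter fun k =>
      v k = (0, EuclideanSpace.single i 1)).card = m' i)
    (x y : EuclideanSpace ℝ (Fin d)) :
    iteratedFDeriv ℝ n
        (fun p : EuclideanSpace ℝ (Fin d) × EuclideanSpace ℝ (Fin d) =>
          ∏ i, K i (p.1 i) (p.2 i)) (x, y) v =
      ∏ i, iteratedDeriv (m i) (fun s => iteratedDeriv (m' i) (K i s) (y i)) (x i) := by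
  induction n generalizing K m m' with
  | zero =>
    have hm : ∀ i : Fin d, m i = 0 ∧ m' i = 0 := by
      intro i
      have := (Finset.sum_eq_zero_iff.mp hn.symm) i (mem_univ i)
      omega
    simp only [iteratedFDeriv_zero_apply]
    exact (Finset.prod_congr rfl fun i _ => by
      rw [(hm i).1, (hm i).2]; simp [iteratedDeriv_zero]).symm
  | succ n IH =>
    obtain ⟨j, hj | hj⟩ := classify m m' hn v hv1 hv2 (Fin.last n)
    all_goals
      rw [iteratedFDeriv_fixed_dir _ (tensorF_contDiff K hK) n (x, y) v, hj]
    -- Case 1 : v (last n) = (e j, 0)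
    · rw [peel_fst K hK j]
      set K' := Function.update K j (fun s t => deriv (fun u => K j u t) s) with hK'def
      have hK' : ∀ i, ContDiff ℝ (⊤ : ℕ∞) (Function.uncurry (K' i)) := by
        intro i
        by_cases hi : i = j
        · subst hi
          rw [hK'def, Function.update_self]
          exact contDiff_uncurry_deriv_fst _ (hK i)
        · rw [hK'def, Function.update_of_ne hi]
          exact hK i
      have hmj : 1 ≤ m j := by
        have hmem : Fin.last n ∈ (univ.filter fun k =>
            v k = (EuclideanSpace.single j 1, 0)) := mem_filter.mpr ⟨mem_univ _, hj⟩
        have hpos := Finset.card_pos.mpr ⟨_, hmem⟩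
        rwa [hv1 j] at hpos
      set m2 := Function.update m j (m j - 1) with hm2def
      have hn' : n = ∑ i, (m2 i + m' i) := by
        have e1 : ∑ i, (m i + m' i) = ∑ i, m i + ∑ i, m' i := Finset.sum_add_distrib
        have e2 : ∑ i, m i = m j + ∑ i ∈ univ.erase j, m i :=
          (Finset.add_sum_erase _ _ (mem_univ j)).symm
        have e3 : ∑ i, (m2 i + m' i) = ((m j - 1) + ∑ i ∈ univ.erase j, m i) + ∑ i, m' i := by
          rw [Finset.sum_add_distrib, hm2def, Finset.sum_update_of_mem (mem_univ j),
            Finset.sdiff_singleton_eq_erase]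
        omega
      have hv1' : ∀ i, (univ.filter fun k =>
          Fin.init v k = (EuclideanSpace.single i 1, 0)).card = m2 i := by
        intro i
        have hc := count_init v ((EuclideanSpace.single i 1 : EuclideanSpace ℝ (Fin d)), 0)
        rw [hv1 i] at hc
        by_cases hi : i = j
        · subst hi
          rw [if_pos hj] at hc
          rw [hm2def, Function.update_self]
          omega
        · rw [if_neg ?_] at hc
          · rw [hm2def, Function.update_of_ne hi]; omega
          · intro he
            rw [hj] at he
            exact single_injective' (Ne.symm hi) (congrArg Prod.fst he)
      have hv2' : ∀ i, (univ.filter fun k =>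
          Fin.init v k = ((0 : EuclideanSpace ℝ (Fin d)), EuclideanSpace.single i 1)).card
            = m' i := by
        intro i
        have hc := count_init v ((0 : EuclideanSpace ℝ (Fin d)), EuclideanSpace.single i 1)
        rw [hv2 i, if_neg ?_] at hc
        · omega
        · intro he
          rw [hj] at he
          exact single_ne_zero' j (congrArg Prod.fst he)
      rw [IH K' hK' m2 m' hn' (Fin.init v) hv1' hv2']
      refine Finset.prod_congr rfl fun i _ => ?_
      by_cases hi : i = j
      · subst hi
        obtain ⟨l, hl⟩ : ∃ l, m i = l + 1 := ⟨m i - 1, by omega⟩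
        have hm2i : m2 i = l := by rw [hm2def, Function.update_self]; omega
        rw [hm2i, hl, iteratedDeriv_succ']
        congr 1
        funext s
        rw [hK'def, Function.update_self]
        exact (swap_deriv_iteratedDeriv (m' i) (K i) (hK i) (y i) s).symm
      · have h1 : K' i = K i := by rw [hK'def, Function.update_of_ne hi]
        have h2 : m2 i = m i := by rw [hm2def, Function.update_of_ne hi]
        rw [h1, h2]
    -- Case 2 : v (last n) = (0, e j)
    · rw [peel_snd K hK j]
      set K' := Function.update K j (fun s t => deriv (K j s) t) with hK'def
      have hK' : ∀ i, ContDiff ℝ (⊤ : ℕ∞) (Function.uncurry (K' i)) := by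
        intro i
        by_cases hi : i = j
        · subst hi
          rw [hK'def, Function.update_self]
          exact contDiff_uncurry_deriv_snd _ (hK i)
        · rw [hK'def, Function.update_of_ne hi]
          exact hK i
      have hmj : 1 ≤ m' j := by
        have hmem : Fin.last n ∈ (univ.filter fun k =>
            v k = ((0 : EuclideanSpace ℝ (Fin d)), EuclideanSpace.single j 1)) :=
          mem_filter.mpr ⟨mem_univ _, hj⟩
        have hpos := Finset.card_pos.mpr ⟨_, hmem⟩
        rwa [hv2 j] at hpos
      set m2 := Function.update m' j (m' j - 1) with hm2def
      have hn' : n = ∑ i, (m i + m2 i) := by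
        have e1 : ∑ i, (m i + m' i) = ∑ i, m i + ∑ i, m' i := Finset.sum_add_distrib
        have e2 : ∑ i, m' i = m' j + ∑ i ∈ univ.erase j, m' i :=
          (Finset.add_sum_erase _ _ (mem_univ j)).symm
        have e3 : ∑ i, (m i + m2 i) = ∑ i, m i + ((m' j - 1) + ∑ i ∈ univ.erase j, m' i) := by
          rw [Finset.sum_add_distrib, hm2def, Finset.sum_update_of_mem (mem_univ j),
            Finset.sdiff_singleton_eq_erase]
        omega
      have hv1' : ∀ i, (univ.filter fun k =>
          Fin.init v k = (EuclideanSpace.single i 1, 0)).card = m i := by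
        intro i
        have hc := count_init v ((EuclideanSpace.single i 1 : EuclideanSpace ℝ (Fin d)), 0)
        rw [hv1 i, if_neg ?_] at hc
        · omega
        · intro he
          rw [hj] at he
          exact single_ne_zero' i (congrArg Prod.fst he).symm
      have hv2' : ∀ i, (univ.filter fun k =>
          Fin.init v k = ((0 : EuclideanSpace ℝ (Fin d)), EuclideanSpace.single i 1)).card
            = m2 i := by
        intro i
        have hc := count_init v ((0 : EuclideanSpace ℝ (Fin d)), EuclideanSpace.single i 1)
        rw [hv2 i] at hc
        by_cases hi : i = j
        · subst hi
          rw [if_pos hj] at hc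
          rw [hm2def, Function.update_self]
          omega
        · rw [if_neg ?_] at hc
          · rw [hm2def, Function.update_of_ne hi]; omega
          · intro he
            rw [hj] at he
            exact single_injective' (Ne.symm hi) (congrArg Prod.snd he)
      rw [IH K' hK' m m2 hn' (Fin.init v) hv1' hv2']
      refine Finset.prod_congr rfl fun i _ => ?_
      by_cases hi : i = j
      · subst hi
        obtain ⟨l, hl⟩ : ∃ l, m' i = l + 1 := ⟨m' i - 1, by omega⟩
        have hm2i : m2 i = l := by rw [hm2def, Function.update_self]; omega
        congr 1
        funext s
        rw [hm2i, hl, iteratedDeriv_succ']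
        rw [hK'def, Function.update_self]
      · have h1 : K' i = K i := by rw [hK'def, Function.update_of_ne hi]
        have h2 : m2 i = m' i := by rw [hm2def, Function.update_of_ne hi]
        rw [h1, h2]
end

section
/- Let d ∈ ℕ, let g : Fin d → (ℝ → ℝ) be a family of functions each of which is ContDiff ℝ n, let m : Fin d → ℕ be a multi-index with n = ∑ i, m i, define f : EuclideanSpace ℝ (Fin d) → ℝ by f x = ∏ i, g i (x i), and let a, b : Fin d → ℝ satisfy a i ≤ b i for all i. Let D^m f x denote iteratedFDeriv ℝ n f x evaluated on a tuple of standard basis vectors in which EuclideanSpace.single i 1 occurs exactly m i times. Then ∫_{x ∈ ∏ i, [a i, b i]} D^m f x dx = ∏ i, ∫_{s ∈ [a i, b i]} (iteratedDeriv (m i) (g i)) s ds. -/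
/-!
Differentiating `x ↦ ∏ i, g i (x i)` in the direction `e_j` only differentiates the factor
`g j`, so by induction on the order the mixed partial `D^m f` is again a tensor product,
`x ↦ ∏ i, g_i^{(m_i)}(x_i)`. Lebesgue measure on the box is the product of the
one-dimensional measures on its edges, and Fubini factors the integral.
-/

open MeasureTheory Finset

theorem iteratedFDeriv_succ_apply_eq_iteratedFDeriv_fderiv_apply
    {𝕜 E F : Type*} [NontriviallyNormedField 𝕜] [NormedAddCommGroup E] [NormedSpace 𝕜 E]
    [NormedAddCommGroup F] [NormedSpace 𝕜 F] {f : E → F} {n : ℕ}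
    (hf : ContDiff 𝕜 (n + 1) f) (x : E) (v : Fin (n + 1) → E) :
    iteratedFDeriv 𝕜 (n + 1) f x v =
      iteratedFDeriv 𝕜 n (fun y => fderiv 𝕜 f y (v (Fin.last n))) x (Fin.init v) := by
  rw [iteratedFDeriv_succ_apply_right]
  exact (congrArg (· (Fin.init v))
    ((ContinuousLinearMap.apply 𝕜 F (v (Fin.last n))).iteratedFDeriv_comp_left
      (hf.fderiv_right le_rfl).contDiffAt le_rfl)).symm

theorem iteratedDeriv_update_deriv {𝕜 F ι : Type*} [NontriviallyNormedField 𝕜]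
    [NormedAddCommGroup F] [NormedSpace 𝕜 F] [DecidableEq ι] (g : ι → 𝕜 → F) (j i : ι)
    (k : ℕ) :
    iteratedDeriv k (Function.update g j (deriv (g j)) i) =
      iteratedDeriv (k + if j = i then 1 else 0) (g i) := by
  rcases eq_or_ne j i with rfl | hji
  · simp [iteratedDeriv_succ']
  · simp [hji, Ne.symm hji]

theorem card_filter_fin_succ_eq {ι : Type*} [DecidableEq ι] {n : ℕ} (idx : Fin (n + 1) → ι)
    (i : ι) :
    #{k | idx k = i} =
      #{k : Fin n | idx k.castSucc = i} + if idx (Fin.last n) = i then 1 else 0 := by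
  simp only [card_filter, Fin.sum_univ_castSucc]

section EuclideanProduct

variable {ι : Type*} [Fintype ι]

theorem contDiff_euclidean_prod_apply {N : WithTop ℕ∞} {g : ι → ℝ → ℝ}
    (hg : ∀ i, ContDiff ℝ N (g i)) :
    ContDiff ℝ N (fun x : EuclideanSpace ℝ ι => ∏ i, g i (x i)) :=
  contDiff_prod fun i _ =>
    (hg i).comp (EuclideanSpace.proj i : EuclideanSpace ℝ ι →L[ℝ] ℝ).contDiff

theorem fderiv_euclidean_prod_apply_single [DecidableEq ι] {g : ι → ℝ → ℝ}
    {x : EuclideanSpace ℝ ι} (hg : ∀ i, DifferentiableAt ℝ (g i) (x i)) (j : ι) :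
    fderiv ℝ (fun x : EuclideanSpace ℝ ι => ∏ i, g i (x i)) x (EuclideanSpace.single j 1) =
      ∏ i, Function.update g j (deriv (g j)) i (x i) := by
  have hfactor (i : ι) : HasFDerivAt (fun x : EuclideanSpace ℝ ι => g i (x i))
      (deriv (g i) (x i) • EuclideanSpace.proj i) x :=
    (hg i).hasDerivAt.comp_hasFDerivAt x
      (EuclideanSpace.proj i : EuclideanSpace ℝ ι →L[ℝ] ℝ).hasFDerivAt
  rw [(HasFDerivAt.finsetProd fun i _ => hfactor i).fderiv, _root_.sum_apply,
    sum_eq_single j (fun i _ hij => by simp [hij]) (by simp)]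
  simp only [Function.apply_update (fun i (h : ℝ → ℝ) => h (x i)),
    prod_update_of_mem (mem_univ j)]
  simp [sdiff_singleton_eq_erase, mul_comm]

theorem iteratedFDeriv_euclidean_prod_apply_single [DecidableEq ι] {n : ℕ}
    {g : ι → ℝ → ℝ} (hg : ∀ i, ContDiff ℝ n (g i)) (idx : Fin n → ι)
    (x : EuclideanSpace ℝ ι) :
    iteratedFDeriv ℝ n (fun x : EuclideanSpace ℝ ι => ∏ i, g i (x i)) x
        (fun k => EuclideanSpace.single (idx k) 1) =
      ∏ i, iteratedDeriv #{k | idx k = i} (g i) (x i) := by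
  induction n generalizing g with
  | zero => simp
  | succ n ih =>
    have hg' (i : ι) :
        ContDiff ℝ n (Function.update g (idx (Fin.last n)) (deriv (g (idx (Fin.last n)))) i) := by
      rcases eq_or_ne i (idx (Fin.last n)) with rfl | hi
      · simpa using (hg _).deriv'
      · simpa [hi] using (hg i).of_le (by norm_cast; omega)
    rw [iteratedFDeriv_succ_apply_eq_iteratedFDeriv_fderiv_apply
      (contDiff_euclidean_prod_apply hg)]
    simp only [fderiv_euclidean_prod_apply_single (fun i => (hg i).differentiable (by simp) _)]
    refine (ih hg' (fun k => idx k.castSucc)).trans (prod_congr rfl fun i _ => ?_)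
    rw [card_filter_fin_succ_eq, iteratedDeriv_update_deriv]

theorem setIntegral_euclidean_univ_pi_prod {𝕜 : Type*} [RCLike 𝕜]
    (F : ι → ℝ → 𝕜) (s : ι → Set ℝ) :
    ∫ x in (WithLp.ofLp ⁻¹' Set.univ.pi s : Set (EuclideanSpace ℝ ι)), ∏ i, F i (x i) =
      ∏ i, ∫ t in s i, F i t := by
  rw [(PiLp.volume_preserving_ofLp ι).setIntegral_preimage_emb
    (MeasurableEquiv.toLp 2 (ι → ℝ)).symm.measurableEmbedding (fun y => ∏ i, F i (y i)),
    volume_pi, Measure.restrict_pi_pi, integral_fintype_prod_eq_prod]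

end EuclideanProduct

theorem box_integral_mixedPartial_tensorProduct_general (d n : ℕ) (g : Fin d → ℝ → ℝ)
    (hg : ∀ i, ContDiff ℝ n (g i)) (m : Fin d → ℕ)
    (idx : Fin n → Fin d)
    (hidx : ∀ i, (Finset.univ.filter fun k => idx k = i).card = m i)
    (a b : Fin d → ℝ) :
    ∫ x in (WithLp.ofLp ⁻¹' (Set.univ.pi fun i => Set.Icc (a i) (b i)) : Set (EuclideanSpace ℝ (Fin d))),
      iteratedFDeriv ℝ n (fun x : EuclideanSpace ℝ (Fin d) => ∏ i, g i (x i)) x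
        (fun k => EuclideanSpace.single (idx k) 1) =
      ∏ i, ∫ s in Set.Icc (a i) (b i), iteratedDeriv (m i) (g i) s := by
  simp_rw [iteratedFDeriv_euclidean_prod_apply_single hg idx, hidx]
  exact setIntegral_euclidean_univ_pi_prod _ _

/-- Core of Equation (15) of the paper: the integral over a box volume of a mixed partial
derivative of a tensor product function reduces to a product of one-dimensional integrals
of one-dimensional derivatives. -/
theorem box_integral_mixedPartial_tensorProduct (d n : ℕ) (g : Fin d → ℝ → ℝ)
    (hg : ∀ i, ContDiff ℝ n (g i)) (m : Fin d → ℕ) (hn : n = ∑ i, m i)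
    (idx : Fin n → Fin d)
    (hidx : ∀ i, (Finset.univ.filter fun k => idx k = i).card = m i)
    (a b : Fin d → ℝ) (hab : ∀ i, a i ≤ b i) :
    ∫ x in (WithLp.ofLp ⁻¹' (Set.univ.pi fun i => Set.Icc (a i) (b i)) : Set (EuclideanSpace ℝ (Fin d))),
      iteratedFDeriv ℝ n (fun x : EuclideanSpace ℝ (Fin d) => ∏ i, g i (x i)) x
        (fun k => EuclideanSpace.single (idx k) 1) =
      ∏ i, ∫ s in Set.Icc (a i) (b i), iteratedDeriv (m i) (g i) s :=
  box_integral_mixedPartial_tensorProduct_general d n g hg m idx hidx a b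
end

section
/- Let d, k ∈ ℕ, let K : Fin d → (ℝ → ℝ → ℝ) be a family of functions whose uncurried versions are ContDiff ℝ ⊤, let A be a finite set of multi-indices α : Fin d → ℕ with ∑ i, α i ≤ k, with coefficients c : A → ℝ, let a, b : Fin d → ℝ satisfy a i ≤ b i, and fix y : Fin d → ℝ. Define f : EuclideanSpace ℝ (Fin d) → ℝ by f x = ∏ i, K i (x i) (y i), and let D^α f denote the mixed partial derivative of f encoded via iteratedFDeriv evaluated on tuples of basis vectors with eᵢ repeated α i times. Then ∫_{x ∈ ∏ i, [a i, b i]} (∑_{α ∈ A} c α · D^α f x) dx = ∑_{α ∈ A} c α · ∏ i, ∫_{s ∈ [a i, b i]} iteratedDeriv (α i) (fun s => K i s (y i)) s ds. -/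
open MeasureTheory Finset
open scoped ContDiff

private lemma contDiff_tensor {d : ℕ} (f : Fin d → ℝ → ℝ) (hf : ∀ i, ContDiff ℝ ∞ (f i)) :
    ContDiff ℝ ∞ (fun x : EuclideanSpace ℝ (Fin d) => ∏ i, f i (x i)) :=
  contDiff_prod fun i _ => (hf i).comp (by exact (EuclideanSpace.proj (𝕜 := ℝ) (ι := Fin d) i).contDiff)

private lemma fderiv_tensor_single {d : ℕ} (f : Fin d → ℝ → ℝ) (hf : ∀ i, ContDiff ℝ ∞ (f i))
    (i₀ : Fin d) (x : EuclideanSpace ℝ (Fin d)) :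
    fderiv ℝ (fun x : EuclideanSpace ℝ (Fin d) => ∏ i, f i (x i)) x
        (EuclideanSpace.single i₀ 1) =
      ∏ i, Function.update f i₀ (deriv (f i₀)) i (x i) := by
  classical
  have hgi : ∀ i : Fin d, HasFDerivAt (fun x : EuclideanSpace ℝ (Fin d) => f i (x i))
      (deriv (f i) (x i) • (EuclideanSpace.proj i : EuclideanSpace ℝ (Fin d) →L[ℝ] ℝ)) x := by
    intro i
    have hp : HasFDerivAt (fun x : EuclideanSpace ℝ (Fin d) => x i)
        (EuclideanSpace.proj (𝕜 := ℝ) (ι := Fin d) i) x :=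
      (EuclideanSpace.proj (𝕜 := ℝ) (ι := Fin d) i).hasFDerivAt
    have hd : HasDerivAt (f i) (deriv (f i) (x i)) (x i) :=
      ((hf i).differentiable (by simp) (x i)).hasDerivAt
    exact hd.comp_hasFDerivAt x hp
  have h := (HasFDerivAt.finset_prod (u := (univ : Finset (Fin d))) fun i _ => hgi i).fderiv
  rw [show (fun x : EuclideanSpace ℝ (Fin d) => ∏ i, f i (x i))
      = (fun x : EuclideanSpace ℝ (Fin d) => ∏ i, (fun x : EuclideanSpace ℝ (Fin d) =>
        f i (x i)) x) from rfl, h]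
  simp only [ContinuousLinearMap.coe_sum', Finset.sum_apply, ContinuousLinearMap.coe_smul',
    Pi.smul_apply, smul_eq_mul]
  have hproj : ∀ i : Fin d,
      (EuclideanSpace.proj i : EuclideanSpace ℝ (Fin d) →L[ℝ] ℝ)
        (EuclideanSpace.single i₀ (1 : ℝ)) = if i = i₀ then 1 else 0 := by
    intro i
    simp [EuclideanSpace.single_apply]
  rw [Finset.sum_eq_single i₀]
  · rw [hproj i₀, if_pos rfl, mul_one,
      ← Finset.mul_prod_erase univ (fun i => Function.update f i₀ (deriv (f i₀)) i (x i))
        (mem_univ i₀)]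
    simp only [Function.update_self]
    rw [mul_comm]
    congr 1
    refine Finset.prod_congr rfl fun j hj => ?_
    rw [Function.update_of_ne (Finset.ne_of_mem_erase hj)]
  · intro i _ hi
    rw [hproj i, if_neg hi, mul_zero, mul_zero]
  · intro h; exact absurd (mem_univ i₀) h

private lemma iteratedFDeriv_tensor {d : ℕ} :
    ∀ (n : ℕ) (f : Fin d → ℝ → ℝ), (∀ i, ContDiff ℝ ∞ (f i)) →
      ∀ (g : Fin n → Fin d) (x : EuclideanSpace ℝ (Fin d)),
      iteratedFDeriv ℝ n (fun x : EuclideanSpace ℝ (Fin d) => ∏ i, f i (x i)) x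
          (fun j => EuclideanSpace.single (g j) 1) =
        ∏ i, iteratedDeriv ((univ.filter fun j => g j = i).card) (f i) (x i)
  | 0, f, hf, g, x => by
      simp
  | n + 1, f, hf, g, x => by
      classical
      set i₀ := g (Fin.last n) with hi₀
      set v : EuclideanSpace ℝ (Fin d) := EuclideanSpace.single i₀ 1 with hv
      have hF : ContDiff ℝ ∞ (fun x : EuclideanSpace ℝ (Fin d) => ∏ i, f i (x i)) :=
        contDiff_tensor f hf
      set f' : Fin d → ℝ → ℝ := Function.update f i₀ (deriv (f i₀)) with hf'def
      have hf' : ∀ i, ContDiff ℝ ∞ (f' i) := by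
        intro i
        rcases eq_or_ne i i₀ with h | h
        · rw [hf'def, h, Function.update_self]
          exact (contDiff_infty_iff_deriv.mp (hf i₀)).2
        · rw [hf'def, Function.update_of_ne h]
          exact hf i
      rw [iteratedFDeriv_succ_apply_right]
      have h1 : iteratedFDeriv ℝ n (fun y => fderiv ℝ
            (fun x : EuclideanSpace ℝ (Fin d) => ∏ i, f i (x i)) y) x
            (Fin.init fun j => EuclideanSpace.single (g j) 1)
            ((fun j : Fin (n + 1) => EuclideanSpace.single (g j) (1 : ℝ)) (Fin.last n))
          = iteratedFDeriv ℝ n (fun y => fderiv ℝ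
            (fun x : EuclideanSpace ℝ (Fin d) => ∏ i, f i (x i)) y v) x
            (Fin.init fun j => EuclideanSpace.single (g j) 1) := by
        have hcomp := (ContinuousLinearMap.apply ℝ ℝ v).iteratedFDeriv_comp_left
          (f := fun y => fderiv ℝ (fun x : EuclideanSpace ℝ (Fin d) => ∏ i, f i (x i)) y)
          (x := x) (hF.fderiv_right (le_of_eq rfl)).contDiffAt (by exact_mod_cast (le_top : (n : ℕ∞) ≤ ⊤) : ((n : ℕ) : WithTop ℕ∞) ≤ ∞)
        have := congrFun (congrArg DFunLike.coe hcomp)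
          (Fin.init fun j => EuclideanSpace.single (g j) 1)
        simp only [ContinuousLinearMap.compContinuousMultilinearMap_coe, Function.comp_apply,
          ContinuousLinearMap.apply_apply] at this
        exact this.symm
      rw [h1]
      have h2 : (fun y : EuclideanSpace ℝ (Fin d) => fderiv ℝ
            (fun x : EuclideanSpace ℝ (Fin d) => ∏ i, f i (x i)) y v)
          = fun y : EuclideanSpace ℝ (Fin d) => ∏ i, f' i (y i) :=
        funext fun y => fderiv_tensor_single f hf i₀ y
      rw [h2]
      have h3 : (Fin.init fun j : Fin (n + 1) => EuclideanSpace.single (g j) (1 : ℝ))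
          = fun j : Fin n => EuclideanSpace.single (g j.castSucc) (1 : ℝ) := rfl
      rw [h3, iteratedFDeriv_tensor n f' hf' (fun j => g j.castSucc) x]
      have hcount : ∀ i : Fin d, (univ.filter fun j : Fin (n + 1) => g j = i).card
          = (univ.filter fun j : Fin n => g j.castSucc = i).card
            + if g (Fin.last n) = i then 1 else 0 := by
        intro i
        rw [Finset.card_filter, Finset.card_filter, Fin.sum_univ_castSucc]
      rw [← Finset.mul_prod_erase univ
        (fun i => iteratedDeriv ((univ.filter fun j : Fin n => g j.castSucc = i).card)
          (f' i) (x i)) (mem_univ i₀),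
        ← Finset.mul_prod_erase univ
        (fun i => iteratedDeriv ((univ.filter fun j : Fin (n + 1) => g j = i).card)
          (f i) (x i)) (mem_univ i₀)]
      congr 1
      · rw [hcount i₀, if_pos hi₀.symm, hf'def, Function.update_self, ← iteratedDeriv_succ']
      · refine Finset.prod_congr rfl fun j hj => ?_
        have hji : j ≠ i₀ := Finset.ne_of_mem_erase hj
        rw [hcount j, if_neg (by rw [← hi₀]; exact fun h => hji h.symm), add_zero, hf'def,
          Function.update_of_ne hji]

/-- Equation (15) of the paper: the FVM operator `L_V[u] = ∫_V D[u](x) dx` with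
`D[u] = ∑_{|α| ≤ k} c_α D^α u` and box volume `V = ∏ i, [a i, b i]`, applied to one argument
of a tensor product covariance function, factorizes into a linear combination of products of
one-dimensional integrals of one-dimensional derivatives. -/
theorem fvm_operator_tensorProduct_factorizes (d k : ℕ) (K : Fin d → ℝ → ℝ → ℝ)
    (hK : ∀ i, ContDiff ℝ (⊤ : ℕ∞) (Function.uncurry (K i)))
    (A : Finset (Fin d → ℕ)) (hA : ∀ α ∈ A, ∑ i, α i ≤ k)
    (c : (Fin d → ℕ) → ℝ)
    (a b : Fin d → ℝ) (hab : ∀ i, a i ≤ b i) (y : Fin d → ℝ)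
    (idx : (α : Fin d → ℕ) → Fin (∑ i, α i) → Fin d)
    (hidx : ∀ (α : Fin d → ℕ) (i : Fin d),
      (Finset.univ.filter fun j => idx α j = i).card = α i) :
    ∫ x in (WithLp.ofLp ⁻¹' (Set.univ.pi fun i => Set.Icc (a i) (b i)) : Set (EuclideanSpace ℝ (Fin d))),
      ∑ α ∈ A, c α *
        iteratedFDeriv ℝ (∑ i, α i)
          (fun x : EuclideanSpace ℝ (Fin d) => ∏ i, K i (x i) (y i)) x
          (fun j => EuclideanSpace.single (idx α j) 1) =
      ∑ α ∈ A, c α * ∏ i, ∫ s in Set.Icc (a i) (b i),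
        iteratedDeriv (α i) (fun s => K i s (y i)) s := by
  classical
  have hf : ∀ i, ContDiff ℝ ∞ (fun s => K i s (y i)) := fun i =>
    ((hK i).of_le (by simp)).comp (contDiff_id.prodMk contDiff_const)
  set f : Fin d → ℝ → ℝ := fun i s => K i s (y i) with hfdef
  set G : (Fin d → ℝ) → ℝ :=
    fun z => ∑ α ∈ A, c α * ∏ i, iteratedDeriv (α i) (f i) (z i) with hGdef
  set T : Set (Fin d → ℝ) := Set.univ.pi fun i => Set.Icc (a i) (b i) with hTdef
  have hpt : ∀ x : EuclideanSpace ℝ (Fin d),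
      (∑ α ∈ A, c α *
        iteratedFDeriv ℝ (∑ i, α i)
          (fun x : EuclideanSpace ℝ (Fin d) => ∏ i, K i (x i) (y i)) x
          (fun j => EuclideanSpace.single (idx α j) 1))
      = G x.ofLp := by
    intro x
    refine Finset.sum_congr rfl fun α hα => ?_
    have key := iteratedFDeriv_tensor (∑ i, α i) f hf (idx α) x
    rw [show (fun x : EuclideanSpace ℝ (Fin d) => ∏ i, K i (x i) (y i))
        = (fun x : EuclideanSpace ℝ (Fin d) => ∏ i, f i (x i)) from rfl, key]
    congr 1
    exact Finset.prod_congr rfl fun i _ => by rw [hidx α i]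
  refine Eq.trans (integral_congr_ae (Filter.Eventually.of_forall fun x => hpt x)) ?_
  rw [(PiLp.volume_preserving_ofLp (ι := Fin d)).setIntegral_preimage_emb
    (MeasurableEquiv.toLp 2 (Fin d → ℝ)).symm.measurableEmbedding G T]
  calc
    ∫ z in T, G z
      = ∑ α ∈ A, c α * ∏ i, ∫ s in Set.Icc (a i) (b i), iteratedDeriv (α i) (f i) s := by
        have hTm : MeasurableSet T := MeasurableSet.univ_pi fun i => measurableSet_Icc
        have hTc : IsCompact T := isCompact_univ_pi fun i => isCompact_Icc
        have hGc : ∀ (α : Fin d → ℕ) (i : Fin d), Continuous (iteratedDeriv (α i) (f i)) := by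
          intro α i
          rw [iteratedDeriv_eq_iterate]
          exact ((hf i).iterate_deriv _).continuous
        have hcont : ∀ α : Fin d → ℕ,
            Continuous fun z : Fin d → ℝ => c α * ∏ i, iteratedDeriv (α i) (f i) (z i) := by
          intro α
          exact continuous_const.mul (continuous_finset_prod _ fun i _ =>
            (hGc α i).comp (continuous_apply i))
        rw [hGdef]
        rw [integral_finset_sum _ fun α hα => ((hcont α).continuousOn).integrableOn_compact hTc]
        refine Finset.sum_congr rfl fun α hα => ?_
        rw [integral_const_mul]
        congr 1
        have hind : ∀ z : Fin d → ℝ,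
            T.indicator (fun z => ∏ i, iteratedDeriv (α i) (f i) (z i)) z
            = ∏ i, (Set.Icc (a i) (b i)).indicator (iteratedDeriv (α i) (f i)) (z i) := by
          intro z
          by_cases hz : z ∈ T
          · rw [Set.indicator_of_mem hz]
            exact Finset.prod_congr rfl fun i _ =>
              (Set.indicator_of_mem (hz i (Set.mem_univ i)) _).symm
          · rw [Set.indicator_of_notMem hz]
            obtain ⟨i, hi⟩ : ∃ i, z i ∉ Set.Icc (a i) (b i) := by
              by_contra hcon
              push_neg at hcon
              exact hz fun i _ => hcon i
            exact (Finset.prod_eq_zero (mem_univ i) (Set.indicator_of_notMem hi _)).symm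
        rw [← integral_indicator hTm]
        simp_rw [hind]
        rw [MeasureTheory.integral_fintype_prod_volume_eq_prod (ι := Fin d)
          (fun i s => (Set.Icc (a i) (b i)).indicator (iteratedDeriv (α i) (f i)) s)]
        exact Finset.prod_congr rfl fun i _ => integral_indicator measurableSet_Icc
end

section
/- Let d ∈ ℕ, let K : Fin d → (ℝ → ℝ → ℝ) have uncurried versions that are ContDiff ℝ ⊤, let A and A' be finite sets of multi-indices α, α' : Fin d → ℕ with coefficients c : A → ℝ and c' : A' → ℝ, and let a, b, a', b' : Fin d → ℝ satisfy a i ≤ b i and a' i ≤ b' i. Define F : EuclideanSpace ℝ (Fin d) × EuclideanSpace ℝ (Fin d) → ℝ by F (x, y) = ∏ i, K i (x i) (y i), and for multi-indices α, α' let D^{α,α'} F (x,y) denote the mixed partial derivative of F encoded via iteratedFDeriv evaluated on basis vectors (eᵢ, 0) repeated α i times and (0, eᵢ) repeated α' i times. Then ∫_{x ∈ ∏ i,[a i, b i]} ∫_{y ∈ ∏ i,[a' i, b' i]} ∑_{α ∈ A} ∑_{α' ∈ A'} c α · c' α' · D^{α,α'} F (x, y) dy dx = ∑_{α ∈ A}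 ∑_{α' ∈ A'} c α · c' α' · ∏ i, ∫_{s ∈ [a i, b i]} ∫_{t ∈ [a' i, b' i]} iteratedDeriv (α i) (fun s => iteratedDeriv (α' i) (K i s) t) s dt ds. -/
open MeasureTheory Finset

open MeasureTheory Finset
open scoped ContDiff

noncomputable section GramAux

variable {E' : Type*} [NormedAddCommGroup E'] [NormedSpace ℝ E']

/-- Directional derivative operator. -/
def gramDirD (w : E') (f : E' → ℝ) : E' → ℝ := fun y => fderiv ℝ f y w

/-- Iterated directional derivatives along a list of directions (last = innermost). -/
def gramIterD (l : List E') (f : E' → ℝ) : E' → ℝ := l.foldr gramDirD f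

@[simp] lemma gramIterD_nil (f : E' → ℝ) : gramIterD [] f = f := rfl

@[simp] lemma gramIterD_cons (w : E') (l : List E') (f : E' → ℝ) :
    gramIterD (w :: l) f = gramDirD w (gramIterD l f) := rfl

lemma gramIterD_append (l₁ l₂ : List E') (f : E' → ℝ) :
    gramIterD (l₁ ++ l₂) f = gramIterD l₁ (gramIterD l₂ f) := by
  simp [gramIterD, List.foldr_append]

lemma gramDirD_contDiff {f : E' → ℝ} (hf : ContDiff ℝ ∞ f) (w : E') :
    ContDiff ℝ ∞ (gramDirD w f) := by
  have h1 : ContDiff ℝ ∞ (fderiv ℝ f) := hf.fderiv_right (by simp)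
  exact h1.clm_apply contDiff_const

lemma gramIterD_contDiff {f : E' → ℝ} (hf : ContDiff ℝ ∞ f) (l : List E') :
    ContDiff ℝ ∞ (gramIterD l f) := by
  induction l with
  | nil => simpa
  | cons w l ih => simpa using gramDirD_contDiff ih w

lemma gramIterD_eq_iteratedFDeriv {f : E' → ℝ} (hf : ContDiff ℝ ∞ f) :
    ∀ (n : ℕ) (m : Fin n → E') (x : E'),
      iteratedFDeriv ℝ n f x m = gramIterD (List.ofFn m) f x := by
  intro n
  induction n generalizing f with
  | zero => intro m x; simp [gramIterD]
  | succ n ih =>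
    intro m x
    rw [iteratedFDeriv_succ_apply_right]
    have h1 : ContDiff ℝ ∞ (fderiv ℝ f) := hf.fderiv_right (by simp)
    have hcomp : iteratedFDeriv ℝ n (gramDirD (m (Fin.last n)) f) x
        = (ContinuousLinearMap.apply ℝ ℝ (m (Fin.last n))).compContinuousMultilinearMap
            (iteratedFDeriv ℝ n (fderiv ℝ f) x) :=
      (ContinuousLinearMap.apply ℝ ℝ (m (Fin.last n))).iteratedFDeriv_comp_left h1.contDiffAt (mod_cast le_top)
    have h2 : iteratedFDeriv ℝ n (fderiv ℝ f) x (Fin.init m) (m (Fin.last n))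
        = iteratedFDeriv ℝ n (gramDirD (m (Fin.last n)) f) x (Fin.init m) := by
      rw [hcomp]; rfl
    rw [h2, ih (gramDirD_contDiff hf _) (Fin.init m) x, List.ofFn_succ' m, List.concat_eq_append,
      gramIterD_append]
    rfl

lemma gramDirD_comm {f : E' → ℝ} (hf : ContDiff ℝ ∞ f) (v w : E') :
    gramDirD v (gramDirD w f) = gramDirD w (gramDirD v f) := by
  funext x
  have hd : Differentiable ℝ (fderiv ℝ f) :=
    (hf.fderiv_right (m := ∞) (by simp)).differentiable (by simp)
  have key : ∀ u w : E', gramDirD w (gramDirD u f) x = fderiv ℝ (fderiv ℝ f) x w u := by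
    intro u w
    have hA : HasFDerivAt (gramDirD u f)
        ((ContinuousLinearMap.apply ℝ ℝ u).comp (fderiv ℝ (fderiv ℝ f) x)) x :=
      (ContinuousLinearMap.apply ℝ ℝ u).hasFDerivAt.comp x (hd x).hasFDerivAt
    show fderiv ℝ (gramDirD u f) x w = _
    rw [hA.fderiv]
    rfl
  have hsym : IsSymmSndFDerivAt ℝ f x :=
    (hf.contDiffAt).isSymmSndFDerivAt (by rw [minSmoothness_of_isRCLikeNormedField]; exact ENat.LEInfty.out)
  rw [key w v, key v w, hsym.eq]


lemma gramIterD_perm {f : E' → ℝ} (hf : ContDiff ℝ ∞ f) {l l' : List E'} (h : l.Perm l') :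
    gramIterD l f = gramIterD l' f := by
  induction h with
  | nil => rfl
  | cons x _ ih => simp [ih]
  | swap x y l => simpa using gramDirD_comm (gramIterD_contDiff hf l) y x
  | trans _ _ ih1 ih2 => rw [ih1, ih2]

/-- 1D: iterated directional derivative in the second variable. -/
lemma gramIterD_snd {G : ℝ × ℝ → ℝ} (hG : ContDiff ℝ ∞ G) :
    ∀ (q : ℕ) (s t : ℝ),
      gramIterD (List.replicate q ((0:ℝ),(1:ℝ))) G (s, t)
        = iteratedDeriv q (fun t' => G (s, t')) t := by
  intro q
  induction q with
  | zero => intro s t; simp [gramIterD]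
  | succ q ih =>
    intro s t
    have hΦ : ContDiff ℝ ∞ (gramIterD (List.replicate q ((0:ℝ),(1:ℝ))) G) :=
      gramIterD_contDiff hG _
    have hder : HasDerivAt (fun t' => gramIterD (List.replicate q ((0:ℝ),(1:ℝ))) G (s, t'))
        (fderiv ℝ (gramIterD (List.replicate q ((0:ℝ),(1:ℝ))) G) (s, t) ((0:ℝ),(1:ℝ))) t := by
      have h1 : HasDerivAt (fun t' : ℝ => ((s, t') : ℝ × ℝ)) ((0:ℝ),(1:ℝ)) t :=
        (hasDerivAt_const t s).prodMk (hasDerivAt_id t)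
      exact ((hΦ.differentiable (by simp)) (s, t)).hasFDerivAt.comp_hasDerivAt t h1
    have : gramIterD (List.replicate (q+1) ((0:ℝ),(1:ℝ))) G (s, t)
        = deriv (fun t' => gramIterD (List.replicate q ((0:ℝ),(1:ℝ))) G (s, t')) t := by
      rw [List.replicate_succ, gramIterD_cons]
      exact (hder.deriv).symm
    rw [this, iteratedDeriv_succ]
    congr 1
    funext t'
    exact ih s t'

/-- 1D: iterated directional derivative in the first variable. -/
lemma gramIterD_fst {G : ℝ × ℝ → ℝ} (hG : ContDiff ℝ ∞ G) :
    ∀ (p : ℕ) (s t : ℝ),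
      gramIterD (List.replicate p ((1:ℝ),(0:ℝ))) G (s, t)
        = iteratedDeriv p (fun s' => G (s', t)) s := by
  intro p
  induction p with
  | zero => intro s t; simp [gramIterD]
  | succ p ih =>
    intro s t
    have hΦ : ContDiff ℝ ∞ (gramIterD (List.replicate p ((1:ℝ),(0:ℝ))) G) :=
      gramIterD_contDiff hG _
    have hder : HasDerivAt (fun s' => gramIterD (List.replicate p ((1:ℝ),(0:ℝ))) G (s', t))
        (fderiv ℝ (gramIterD (List.replicate p ((1:ℝ),(0:ℝ))) G) (s, t) ((1:ℝ),(0:ℝ))) s := by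
      have h1 : HasDerivAt (fun s' : ℝ => ((s', t) : ℝ × ℝ)) ((1:ℝ),(0:ℝ)) s :=
        (hasDerivAt_id s).prodMk (hasDerivAt_const s t)
      exact ((hΦ.differentiable (by simp)) (s, t)).hasFDerivAt.comp_hasDerivAt s h1
    have : gramIterD (List.replicate (p+1) ((1:ℝ),(0:ℝ))) G (s, t)
        = deriv (fun s' => gramIterD (List.replicate p ((1:ℝ),(0:ℝ))) G (s', t)) s := by
      rw [List.replicate_succ, gramIterD_cons]
      exact (hder.deriv).symm
    rw [this, iteratedDeriv_succ]
    congr 1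
    funext s'
    exact ih s' t

/-- 2D mixed derivative via iterated directional derivatives. -/
lemma gramIterD_mixed {G : ℝ × ℝ → ℝ} (hG : ContDiff ℝ ∞ G) (p q : ℕ) (s t : ℝ) :
    gramIterD (List.replicate p ((1:ℝ),(0:ℝ)) ++ List.replicate q ((0:ℝ),(1:ℝ))) G (s, t)
      = iteratedDeriv p (fun s' => iteratedDeriv q (fun t' => G (s', t')) t) s := by
  rw [gramIterD_append, gramIterD_fst (gramIterD_contDiff hG _) p s t]
  congr 1
  funext s'
  exact gramIterD_snd hG q s' t


section Tensor

variable {d : ℕ}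

/-- Coordinate projection on a product of two Euclidean spaces. -/
def gramProj (i : Fin d) :
    (EuclideanSpace ℝ (Fin d) × EuclideanSpace ℝ (Fin d)) →L[ℝ] ℝ × ℝ :=
  ((EuclideanSpace.proj i).comp (ContinuousLinearMap.fst ℝ _ _)).prod
    ((EuclideanSpace.proj i).comp (ContinuousLinearMap.snd ℝ _ _))

@[simp] lemma gramProj_apply (i : Fin d) (q : EuclideanSpace ℝ (Fin d) × EuclideanSpace ℝ (Fin d)) :
    gramProj i q = (q.1 i, q.2 i) := rfl

/-- Direction vector indexed by a coordinate and a 2D direction. -/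
def gramDir (a : Fin d × (ℝ × ℝ)) :
    EuclideanSpace ℝ (Fin d) × EuclideanSpace ℝ (Fin d) :=
  (EuclideanSpace.single a.1 a.2.1, EuclideanSpace.single a.1 a.2.2)

lemma gramProj_gramDir (i : Fin d) (a : Fin d × (ℝ × ℝ)) :
    gramProj i (gramDir a) = if i = a.1 then a.2 else 0 := by
  ext <;> simp [gramDir, EuclideanSpace.single_apply] <;> split <;> simp

lemma tensor_contDiff {G : Fin d → (ℝ × ℝ) → ℝ} (hG : ∀ i, ContDiff ℝ ∞ (G i)) :
    ContDiff ℝ ∞ (fun q : EuclideanSpace ℝ (Fin d) × EuclideanSpace ℝ (Fin d) =>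
      ∏ i, G i (q.1 i, q.2 i)) := by
  apply contDiff_prod (t := Finset.univ) (f := fun i q => G i (gramProj i q))
  intro i _
  exact (hG i).comp (gramProj i).contDiff

lemma tensor_fderiv {G : Fin d → (ℝ × ℝ) → ℝ} (hG : ∀ i, ContDiff ℝ ∞ (G i))
    (p : EuclideanSpace ℝ (Fin d) × EuclideanSpace ℝ (Fin d)) (i₀ : Fin d) (w : ℝ × ℝ) :
    fderiv ℝ (fun q : EuclideanSpace ℝ (Fin d) × EuclideanSpace ℝ (Fin d) =>
        ∏ i, G i (q.1 i, q.2 i)) p (gramDir (i₀, w))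
      = fderiv ℝ (G i₀) (p.1 i₀, p.2 i₀) w * ∏ j ∈ Finset.univ.erase i₀, G j (p.1 j, p.2 j) := by
  have hdiff : ∀ i : Fin d, DifferentiableAt ℝ (fun q :
      EuclideanSpace ℝ (Fin d) × EuclideanSpace ℝ (Fin d) => G i (gramProj i q)) p :=
    fun i => (((hG i).comp (gramProj i).contDiff).differentiable (by simp)) p
  have hfd : ∀ i : Fin d, fderiv ℝ (fun q :
      EuclideanSpace ℝ (Fin d) × EuclideanSpace ℝ (Fin d) => G i (gramProj i q)) p
      = (fderiv ℝ (G i) (gramProj i p)).comp (gramProj i) := by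
    intro i
    have := fderiv_comp (𝕜 := ℝ) p (((hG i).differentiable (by simp)) (gramProj i p))
      ((gramProj i).differentiableAt)
    rw [(gramProj i).fderiv] at this
    exact this
  have hmain := fderiv_finset_prod (u := Finset.univ)
    (g := fun i (q : EuclideanSpace ℝ (Fin d) × EuclideanSpace ℝ (Fin d)) => G i (gramProj i q))
    (x := p) (fun i _ => hdiff i)
  have happ := congrArg (fun (L : (EuclideanSpace ℝ (Fin d) × EuclideanSpace ℝ (Fin d)) →L[ℝ] ℝ)
    => L (gramDir (i₀, w))) hmain
  simp only [ContinuousLinearMap.sum_apply, ContinuousLinearMap.smul_apply] at happ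
  have hterm : ∀ i : Fin d,
      fderiv ℝ (fun q : EuclideanSpace ℝ (Fin d) × EuclideanSpace ℝ (Fin d) =>
        G i (gramProj i q)) p (gramDir (i₀, w))
      = if i = i₀ then fderiv ℝ (G i₀) (gramProj i₀ p) w else 0 := by
    intro i
    rw [hfd i]
    simp only [ContinuousLinearMap.comp_apply, gramProj_gramDir]
    split
    · next h => subst h; rfl
    · simp
  calc fderiv ℝ (fun q : EuclideanSpace ℝ (Fin d) × EuclideanSpace ℝ (Fin d) =>
        ∏ i, G i (q.1 i, q.2 i)) p (gramDir (i₀, w))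
      = ∑ i, (∏ j ∈ Finset.univ.erase i, G j (gramProj j p)) •
          (fderiv ℝ (fun q : EuclideanSpace ℝ (Fin d) × EuclideanSpace ℝ (Fin d) =>
            G i (gramProj i q)) p (gramDir (i₀, w))) := happ
    _ = ∑ i, (∏ j ∈ Finset.univ.erase i, G j (gramProj j p)) •
          (if i = i₀ then fderiv ℝ (G i₀) (gramProj i₀ p) w else 0) := by
        refine Finset.sum_congr rfl fun i _ => ?_
        rw [hterm i]
    _ = ∑ i, (if i = i₀ then (∏ j ∈ Finset.univ.erase i, G j (gramProj j p)) •
          fderiv ℝ (G i₀) (gramProj i₀ p) w else 0) := by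
        refine Finset.sum_congr rfl fun i _ => ?_
        split <;> simp
    _ = (∏ j ∈ Finset.univ.erase i₀, G j (gramProj j p)) •
          fderiv ℝ (G i₀) (gramProj i₀ p) w := by
        rw [Finset.sum_ite_eq' Finset.univ i₀]
        simp
    _ = fderiv ℝ (G i₀) (p.1 i₀, p.2 i₀) w
          * ∏ j ∈ Finset.univ.erase i₀, G j (p.1 j, p.2 j) := by
        simp [smul_eq_mul, mul_comm]

lemma gramIterD_tensor {G : Fin d → (ℝ × ℝ) → ℝ} (hG : ∀ i, ContDiff ℝ ∞ (G i)) :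
    ∀ (l : List (Fin d × (ℝ × ℝ))) (p : EuclideanSpace ℝ (Fin d) × EuclideanSpace ℝ (Fin d)),
      gramIterD (l.map gramDir)
          (fun q : EuclideanSpace ℝ (Fin d) × EuclideanSpace ℝ (Fin d) =>
            ∏ i, G i (q.1 i, q.2 i)) p
        = ∏ i, gramIterD ((l.filter fun a => a.1 = i).map Prod.snd) (G i) (p.1 i, p.2 i) := by
  intro l
  induction l with
  | nil => intro p; simp
  | cons a l ih =>
    intro p
    obtain ⟨i₀, w⟩ := a
    set H : Fin d → (ℝ × ℝ) → ℝ :=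
      fun i => gramIterD ((l.filter fun a => a.1 = i).map Prod.snd) (G i) with hHdef
    have hH : ∀ i, ContDiff ℝ ∞ (H i) := fun i => gramIterD_contDiff (hG i) _
    have hfun : gramIterD (l.map gramDir)
        (fun q : EuclideanSpace ℝ (Fin d) × EuclideanSpace ℝ (Fin d) =>
          ∏ i, G i (q.1 i, q.2 i))
        = fun q : EuclideanSpace ℝ (Fin d) × EuclideanSpace ℝ (Fin d) =>
          ∏ i, H i (q.1 i, q.2 i) := funext fun q => ih q
    have hlhs : gramIterD (((i₀, w) :: l).map gramDir)
        (fun q : EuclideanSpace ℝ (Fin d) × EuclideanSpace ℝ (Fin d) =>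
          ∏ i, G i (q.1 i, q.2 i)) p
        = fderiv ℝ (fun q : EuclideanSpace ℝ (Fin d) × EuclideanSpace ℝ (Fin d) =>
            ∏ i, H i (q.1 i, q.2 i)) p (gramDir (i₀, w)) := by
      rw [List.map_cons, gramIterD_cons, hfun]
      rfl
    rw [hlhs, tensor_fderiv hH p i₀ w]
    have hfilter : ∀ i : Fin d, (((i₀, w) :: l).filter fun a => a.1 = i)
        = if i₀ = i then (i₀, w) :: (l.filter fun a => a.1 = i)
          else l.filter fun a => a.1 = i := by
      intro i
      by_cases h : i₀ = i <;> simp [List.filter_cons, h]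
    have hrhs : ∀ i : Fin d,
        gramIterD ((((i₀, w) :: l).filter fun a => a.1 = i).map Prod.snd) (G i) (p.1 i, p.2 i)
        = if i₀ = i then gramDirD w (H i) (p.1 i, p.2 i) else H i (p.1 i, p.2 i) := by
      intro i
      rw [hfilter i]
      by_cases h : i₀ = i <;> simp [h, hHdef]
    calc fderiv ℝ (H i₀) (p.1 i₀, p.2 i₀) w * ∏ j ∈ Finset.univ.erase i₀, H j (p.1 j, p.2 j)
        = ∏ i, (if i₀ = i then gramDirD w (H i) (p.1 i, p.2 i) else H i (p.1 i, p.2 i)) := by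
          rw [← Finset.mul_prod_erase Finset.univ _ (Finset.mem_univ i₀)]
          congr 1
          · simp [gramDirD]
          · refine Finset.prod_congr rfl fun j hj => ?_
            rw [if_neg (Ne.symm (Finset.ne_of_mem_erase hj))]
      _ = ∏ i, gramIterD ((((i₀, w) :: l).filter fun a => a.1 = i).map Prod.snd) (G i)
            (p.1 i, p.2 i) := by
          refine Finset.prod_congr rfl fun i _ => ?_
          rw [hrhs i]

/-- Canonical pair list for a pair of multi-indices. -/
def gramPairs (α α' : Fin d → ℕ) : List (Fin d × (ℝ × ℝ)) :=
  (List.finRange d).flatMap fun i =>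
    List.replicate (α i) (i, ((1:ℝ),(0:ℝ))) ++ List.replicate (α' i) (i, ((0:ℝ),(1:ℝ)))

/-- Canonical direction list for a pair of multi-indices. -/
def gramCanon (α α' : Fin d → ℕ) :
    List (EuclideanSpace ℝ (Fin d) × EuclideanSpace ℝ (Fin d)) :=
  (List.finRange d).flatMap fun i =>
    List.replicate (α i) ((EuclideanSpace.single i 1 : EuclideanSpace ℝ (Fin d)), 0)
      ++ List.replicate (α' i) (0, (EuclideanSpace.single i 1 : EuclideanSpace ℝ (Fin d)))

lemma gram_single_zero (i : Fin d) :
    (EuclideanSpace.single i (0:ℝ) : EuclideanSpace ℝ (Fin d)) = 0 := by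
  ext j; simp [EuclideanSpace.single_apply]

lemma gramCanon_eq_map (α α' : Fin d → ℕ) :
    (gramPairs α α').map gramDir = gramCanon α α' := by
  rw [gramPairs, gramCanon, List.map_flatMap]
  refine congrArg (fun g => List.flatMap g (List.finRange d)) (funext fun i => ?_)
  simp [List.map_replicate, gramDir, gram_single_zero]

lemma gram_flatMap_single {γ : Type*} {g : Fin d → List γ} (i : Fin d)
    (h : ∀ j, j ≠ i → g j = []) : (List.finRange d).flatMap g = g i := by
  have hgen : ∀ (l : List (Fin d)), l.Nodup → i ∈ l → l.flatMap g = g i := by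
    intro l
    induction l with
    | nil => simp
    | cons a l ih =>
      intro hnd hi
      rcases List.mem_cons.mp hi with h1 | h1
      · subst h1
        have : l.flatMap g = [] := by
          refine List.flatMap_eq_nil_iff.mpr fun j hj => h j ?_
          exact fun he => (List.nodup_cons.mp hnd).1 (he ▸ hj)
        simp [List.flatMap_cons, this]
      · have hne : a ≠ i := fun he => by
          subst he; exact (List.nodup_cons.mp hnd).1 h1
        simp [List.flatMap_cons, h a hne, ih (List.nodup_cons.mp hnd).2 h1]
  exact hgen _ (List.nodup_finRange d) (List.mem_finRange i)

lemma gramPairs_filter (α α' : Fin d → ℕ) (i : Fin d) :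
    ((gramPairs α α').filter fun a => a.1 = i)
      = List.replicate (α i) (i, ((1:ℝ),(0:ℝ))) ++ List.replicate (α' i) (i, ((0:ℝ),(1:ℝ))) := by
  rw [gramPairs, List.filter_flatMap]
  rw [gram_flatMap_single i (fun j hj => ?_)]
  · simp [List.filter_append, List.filter_replicate]
  · simp [List.filter_append, List.filter_replicate, hj]

lemma gram_count_ofFn {n : ℕ} {β : Type*} [DecidableEq β] (v : Fin n → β) (z : β) :
    List.count z (List.ofFn v) = (Finset.univ.filter fun j => v j = z).card := by
  have hc : ∀ (l : List (Fin n)),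
      List.countP (fun j => v j == z) l = (l.map fun j => if v j = z then 1 else 0).sum := by
    intro l
    induction l with
    | nil => simp
    | cons a l ih => by_cases h : v a = z <;> simp [List.countP_cons, h, ih, Nat.add_comm]
  rw [List.ofFn_eq_map, List.count_eq_countP, List.countP_map, Finset.card_filter,
    Fin.sum_univ_def]
  exact hc (List.finRange n)

lemma gram_count_flat {β : Type*} [DecidableEq β] (m m' : Fin d → ℕ)
    (u u' : Fin d → β) (z : β) :
    List.count z ((List.finRange d).flatMap fun i =>
        List.replicate (m i) (u i) ++ List.replicate (m' i) (u' i))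
      = ∑ i, ((if u i = z then m i else 0) + (if u' i = z then m' i else 0)) := by
  rw [List.count_flatMap, Fin.sum_univ_def]
  refine congrArg List.sum (List.map_congr_left fun i _ => ?_)
  simp [List.count_replicate]

lemma gram_e1_inj {i i' : Fin d}
    (h : (EuclideanSpace.single i (1:ℝ) : EuclideanSpace ℝ (Fin d)) = EuclideanSpace.single i' 1) :
    i = i' := by
  by_contra hne
  have := congrArg (fun x => x i) h
  rw [show (EuclideanSpace.single i (1:ℝ) : EuclideanSpace ℝ (Fin d)) i = 1 by
    simp [EuclideanSpace.single_apply]] at this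
  rw [show (EuclideanSpace.single i' (1:ℝ) : EuclideanSpace ℝ (Fin d)) i = 0 by
    simp [EuclideanSpace.single_apply]; exact fun h' => hne h'] at this
  norm_num at this

lemma gram_e1_ne_zero (i : Fin d) :
    (EuclideanSpace.single i (1:ℝ) : EuclideanSpace ℝ (Fin d)) ≠ 0 := by
  intro h
  have := congrArg (fun x => x i) h
  simp [EuclideanSpace.single_apply] at this

open scoped Classical in
lemma gram_perm (α α' : Fin d → ℕ)
    (v : Fin (∑ i, (α i + α' i)) →
      EuclideanSpace ℝ (Fin d) × EuclideanSpace ℝ (Fin d))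
    (hv1 : ∀ i, (Finset.univ.filter fun j =>
      v j = (EuclideanSpace.single i 1, 0)).card = α i)
    (hv2 : ∀ i, (Finset.univ.filter fun j =>
      v j = (0, EuclideanSpace.single i 1)).card = α' i) :
    (List.ofFn v).Perm (gramCanon α α') := by
  set e1 : Fin d → EuclideanSpace ℝ (Fin d) × EuclideanSpace ℝ (Fin d) :=
    fun i => (EuclideanSpace.single i 1, 0) with he1def
  set e2 : Fin d → EuclideanSpace ℝ (Fin d) × EuclideanSpace ℝ (Fin d) :=
    fun i => (0, EuclideanSpace.single i 1) with he2def
  have he1 : ∀ {i i'}, e1 i = e1 i' → i = i' := by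
    intro i i' h
    exact gram_e1_inj (congrArg Prod.fst h)
  have he2 : ∀ {i i'}, e2 i = e2 i' → i = i' := by
    intro i i' h
    exact gram_e1_inj (congrArg Prod.snd h)
  have he12 : ∀ i i', e1 i ≠ e2 i' := by
    intro i i' h
    exact gram_e1_ne_zero i (congrArg Prod.fst h)
  -- covering argument
  have hcov : ∀ j, (∃ i, v j = e1 i) ∨ (∃ i, v j = e2 i) := by
    set B : Finset (Fin (∑ i, (α i + α' i))) := Finset.univ.biUnion fun i =>
      (Finset.univ.filter fun j => v j = e1 i) ∪ (Finset.univ.filter fun j => v j = e2 i)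
      with hBdef
    have hdisj : ∀ i, Disjoint (Finset.univ.filter fun j => v j = e1 i)
        (Finset.univ.filter fun j => v j = e2 i) := by
      intro i
      refine Finset.disjoint_left.mpr fun j hj1 hj2 => ?_
      rw [Finset.mem_filter] at hj1 hj2
      exact he12 i i (hj1.2 ▸ hj2.2)
    have hcard : B.card = ∑ i, (α i + α' i) := by
      rw [hBdef, Finset.card_biUnion]
      · refine Finset.sum_congr rfl fun i _ => ?_
        rw [Finset.card_union_of_disjoint (hdisj i), hv1 i, hv2 i]
      · intro i _ i' _ hne
        refine Finset.disjoint_left.mpr fun j hj1 hj2 => ?_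
        rw [Finset.mem_union, Finset.mem_filter, Finset.mem_filter] at hj1 hj2
        rcases hj1 with h1 | h1 <;> rcases hj2 with h2 | h2
        · exact hne (he1 (h1.2.symm.trans h2.2))
        · exact he12 i i' (h1.2.symm.trans h2.2)
        · exact he12 i' i (h2.2.symm.trans h1.2)
        · exact hne (he2 (h1.2.symm.trans h2.2))
    have hBuniv : B = Finset.univ := Finset.eq_univ_of_card _ (by simp [hcard])
    intro j
    have hj : j ∈ B := hBuniv ▸ Finset.mem_univ j
    rw [hBdef, Finset.mem_biUnion] at hj
    obtain ⟨i, _, hi⟩ := hj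
    rw [Finset.mem_union, Finset.mem_filter, Finset.mem_filter] at hi
    rcases hi with h | h
    · exact Or.inl ⟨i, h.2⟩
    · exact Or.inr ⟨i, h.2⟩
  refine (@List.perm_iff_count _ instBEqOfDecidableEq _).mpr fun z => ?_
  rw [gram_count_ofFn, gramCanon, gram_count_flat α α'
    (fun i => ((EuclideanSpace.single i 1 : EuclideanSpace ℝ (Fin d)), 0))
    (fun i => ((0 : EuclideanSpace ℝ (Fin d)), EuclideanSpace.single i 1)) z]
  by_cases h1 : ∃ i, z = e1 i
  · obtain ⟨i, rfl⟩ := h1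
    rw [show (Finset.univ.filter fun j => v j = e1 i).card = α i from hv1 i]
    rw [Finset.sum_eq_single i]
    · rw [if_pos rfl, if_neg (fun h => he12 i i h.symm)]
      simp
    · intro i' _ hne
      rw [if_neg (fun h => hne (he1 h)), if_neg (fun h => he12 i i' h.symm)]
      simp
    · intro h
      exact absurd (Finset.mem_univ i) h
  · by_cases h2 : ∃ i, z = e2 i
    · obtain ⟨i, rfl⟩ := h2
      rw [show (Finset.univ.filter fun j => v j = e2 i).card = α' i from hv2 i]
      rw [Finset.sum_eq_single i]
      · rw [if_pos rfl, if_neg (fun h => he12 i i h)]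
        simp
      · intro i' _ hne
        rw [if_neg (fun h => he12 i' i h), if_neg (fun h => hne (he2 h))]
        simp
      · intro h
        exact absurd (Finset.mem_univ i) h
    · have hzero : (Finset.univ.filter fun j => v j = z) = ∅ := by
        refine Finset.filter_eq_empty_iff.mpr fun {j} _ => ?_
        intro hvj
        rcases hcov j with ⟨i, hi⟩ | ⟨i, hi⟩
        · exact h1 ⟨i, hvj ▸ hi⟩
        · exact h2 ⟨i, hvj ▸ hi⟩
      rw [hzero]
      simp only [Finset.card_empty]
      symm
      refine Finset.sum_eq_zero fun i _ => ?_
      rw [if_neg (fun h => h1 ⟨i, h.symm⟩), if_neg (fun h => h2 ⟨i, h.symm⟩)]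
      simp

open scoped Classical in
lemma gram_pointwise (K : Fin d → ℝ → ℝ → ℝ)
    (hK : ∀ i, ContDiff ℝ ∞ (Function.uncurry (K i))) (α α' : Fin d → ℕ)
    (v : Fin (∑ i, (α i + α' i)) → EuclideanSpace ℝ (Fin d) × EuclideanSpace ℝ (Fin d))
    (hv1 : ∀ i, (Finset.univ.filter fun j =>
      v j = (EuclideanSpace.single i 1, 0)).card = α i)
    (hv2 : ∀ i, (Finset.univ.filter fun j =>
      v j = (0, EuclideanSpace.single i 1)).card = α' i)
    (x y : EuclideanSpace ℝ (Fin d)) :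
    iteratedFDeriv ℝ (∑ i, (α i + α' i))
        (fun p : EuclideanSpace ℝ (Fin d) × EuclideanSpace ℝ (Fin d) =>
          ∏ i, K i (p.1 i) (p.2 i)) (x, y) v
      = ∏ i, iteratedDeriv (α i) (fun s => iteratedDeriv (α' i) (K i s) (y i)) (x i) := by
  have hG : ∀ i, ContDiff ℝ ∞ (Function.uncurry (K i)) := hK
  have hF : ContDiff ℝ ∞ (fun q : EuclideanSpace ℝ (Fin d) × EuclideanSpace ℝ (Fin d) =>
      ∏ i, Function.uncurry (K i) (q.1 i, q.2 i)) := tensor_contDiff hG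
  calc iteratedFDeriv ℝ (∑ i, (α i + α' i))
        (fun p : EuclideanSpace ℝ (Fin d) × EuclideanSpace ℝ (Fin d) =>
          ∏ i, K i (p.1 i) (p.2 i)) (x, y) v
      = gramIterD (List.ofFn v)
          (fun q : EuclideanSpace ℝ (Fin d) × EuclideanSpace ℝ (Fin d) =>
            ∏ i, Function.uncurry (K i) (q.1 i, q.2 i)) (x, y) :=
        gramIterD_eq_iteratedFDeriv hF _ v (x, y)
    _ = gramIterD (gramCanon α α')
          (fun q : EuclideanSpace ℝ (Fin d) × EuclideanSpace ℝ (Fin d) =>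
            ∏ i, Function.uncurry (K i) (q.1 i, q.2 i)) (x, y) := by
        rw [gramIterD_perm hF (gram_perm α α' v hv1 hv2)]
    _ = gramIterD ((gramPairs α α').map gramDir)
          (fun q : EuclideanSpace ℝ (Fin d) × EuclideanSpace ℝ (Fin d) =>
            ∏ i, Function.uncurry (K i) (q.1 i, q.2 i)) (x, y) := by
        rw [gramCanon_eq_map]
    _ = ∏ i, gramIterD (((gramPairs α α').filter fun a => a.1 = i).map Prod.snd)
          (Function.uncurry (K i)) (x i, y i) := gramIterD_tensor hG _ (x, y)
    _ = ∏ i, gramIterD (List.replicate (α i) ((1:ℝ),(0:ℝ))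
          ++ List.replicate (α' i) ((0:ℝ),(1:ℝ))) (Function.uncurry (K i)) (x i, y i) := by
        refine Finset.prod_congr rfl fun i _ => ?_
        rw [gramPairs_filter]
        simp [List.map_replicate]
    _ = ∏ i, iteratedDeriv (α i) (fun s => iteratedDeriv (α' i) (K i s) (y i)) (x i) :=
        Finset.prod_congr rfl fun i _ => gramIterD_mixed (hG i) (α i) (α' i) (x i) (y i)

lemma gram_box_integral (f : Fin d → ℝ → ℝ) (s : Fin d → Set ℝ)
    (hs : ∀ i, MeasurableSet (s i)) :
    ∫ x in (WithLp.ofLp ⁻¹' (Set.univ.pi s) : Set (EuclideanSpace ℝ (Fin d))), ∏ i, f i (x i)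
      = ∏ i, ∫ t in s i, f i t := by
  refine ((PiLp.volume_preserving_ofLp (Fin d)).setIntegral_preimage_emb
    (MeasurableEquiv.toLp 2 (Fin d → ℝ)).symm.measurableEmbedding
    (fun y : Fin d → ℝ => ∏ i, f i (y i)) (Set.univ.pi s)).trans ?_
  have hms : MeasurableSet (Set.univ.pi s : Set (Fin d → ℝ)) :=
    MeasurableSet.univ_pi fun i => hs i
  rw [← integral_indicator hms]
  have hind : (Set.univ.pi s : Set (Fin d → ℝ)).indicator
        (fun x : Fin d → ℝ => ∏ i, f i (x i))
      = fun x : Fin d → ℝ => ∏ i, (s i).indicator (f i) (x i) := by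
    funext x
    by_cases hx : x ∈ (Set.univ.pi s : Set (Fin d → ℝ))
    · rw [Set.indicator_of_mem hx]
      refine Finset.prod_congr rfl fun i _ => ?_
      rw [Set.indicator_of_mem (hx i (Set.mem_univ i))]
    · rw [Set.indicator_of_notMem hx]
      rw [Set.mem_univ_pi] at hx
      push_neg at hx
      obtain ⟨j, hj⟩ := hx
      exact (Finset.prod_eq_zero (Finset.mem_univ j) (Set.indicator_of_notMem hj _)).symm
  rw [hind, MeasureTheory.integral_fintype_prod_volume_eq_prod
    (fun i t => (s i).indicator (f i) t)]
  exact Finset.prod_congr rfl fun i _ => integral_indicator (hs i)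

end Tensor

end GramAux

open scoped Classical in
/-- Equation (16) of the paper: the Gram entry `L_V k L'_{V'}` for two box volumes and two
linear differential operators applied to the two arguments of a tensor product covariance
function reduces to a linear combination of products of one-dimensional double integrals of
one-dimensional mixed derivatives. -/
theorem gram_entry_tensorProduct_factorizes (d : ℕ) (K : Fin d → ℝ → ℝ → ℝ)
    (hK : ∀ i, ContDiff ℝ (⊤ : ℕ∞) (Function.uncurry (K i)))
    (A A' : Finset (Fin d → ℕ)) (c c' : (Fin d → ℕ) → ℝ)
    (a b a' b' : Fin d → ℝ) (hab : ∀ i, a i ≤ b i) (hab' : ∀ i, a' i ≤ b' i)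
    (v : (α : Fin d → ℕ) → (α' : Fin d → ℕ) → Fin (∑ i, (α i + α' i)) →
      EuclideanSpace ℝ (Fin d) × EuclideanSpace ℝ (Fin d))
    (hv1 : ∀ (α α' : Fin d → ℕ) (i : Fin d),
      (Finset.univ.filter fun j => v α α' j = (EuclideanSpace.single i 1, 0)).card = α i)
    (hv2 : ∀ (α α' : Fin d → ℕ) (i : Fin d),
      (Finset.univ.filter fun j => v α α' j = (0, EuclideanSpace.single i 1)).card = α' i) :
    ∫ x in (WithLp.ofLp ⁻¹' (Set.univ.pi fun i => Set.Icc (a i) (b i)) : Set (EuclideanSpace ℝ (Fin d))),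
      ∫ y in (WithLp.ofLp ⁻¹' (Set.univ.pi fun i => Set.Icc (a' i) (b' i)) : Set (EuclideanSpace ℝ (Fin d))),
        ∑ α ∈ A, ∑ α' ∈ A', c α * c' α' *
          iteratedFDeriv ℝ (∑ i, (α i + α' i))
            (fun p : EuclideanSpace ℝ (Fin d) × EuclideanSpace ℝ (Fin d) =>
              ∏ i, K i (p.1 i) (p.2 i)) (x, y) (v α α') =
      ∑ α ∈ A, ∑ α' ∈ A', c α * c' α' *
        ∏ i, ∫ s in Set.Icc (a i) (b i), ∫ t in Set.Icc (a' i) (b' i),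
          iteratedDeriv (α i) (fun s => iteratedDeriv (α' i) (K i s) t) s := by
  
  have hK' : ∀ i, ContDiff ℝ ∞ (Function.uncurry (K i)) := fun i => (hK i).of_le (mod_cast le_top)
  set h : (Fin d → ℕ) → (Fin d → ℕ) → Fin d → ℝ → ℝ → ℝ := fun α α' i s t =>
    iteratedDeriv (α i) (fun s => iteratedDeriv (α' i) (K i s) t) s with hhdef
  have hmix : ∀ (α α' : Fin d → ℕ) (i : Fin d), (fun p : ℝ × ℝ => h α α' i p.1 p.2)
      = gramIterD (List.replicate (α i) ((1:ℝ),(0:ℝ))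
          ++ List.replicate (α' i) ((0:ℝ),(1:ℝ))) (Function.uncurry (K i)) := by
    intro α α' i
    funext p
    exact (gramIterD_mixed (hK' i) (α i) (α' i) p.1 p.2).symm
  have hcont : ∀ (α α' : Fin d → ℕ) (i : Fin d),
      Continuous (fun p : ℝ × ℝ => h α α' i p.1 p.2) := by
    intro α α' i
    rw [hmix α α' i]
    exact (gramIterD_contDiff (hK' i) _).continuous
  -- continuity of the parametric inner 1D integral
  have hg : ∀ (α α' : Fin d → ℕ) (i : Fin d),
      Continuous (fun s : ℝ => ∫ t in Set.Icc (a' i) (b' i), h α α' i s t) := by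
    intro α α' i
    exact continuous_parametric_integral_of_continuous (f := h α α' i)
      (by exact hcont α α' i) isCompact_Icc
  -- inner integral evaluation, for every x
  have hinner : ∀ x : EuclideanSpace ℝ (Fin d),
      (∫ y in (WithLp.ofLp ⁻¹' (Set.univ.pi fun i => Set.Icc (a' i) (b' i)) : Set (EuclideanSpace ℝ (Fin d))),
        ∑ α ∈ A, ∑ α' ∈ A', c α * c' α' *
          iteratedFDeriv ℝ (∑ i, (α i + α' i))
            (fun p : EuclideanSpace ℝ (Fin d) × EuclideanSpace ℝ (Fin d) =>
              ∏ i, K i (p.1 i) (p.2 i)) (x, y) (v α α'))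
      = ∑ α ∈ A, ∑ α' ∈ A', c α * c' α' *
          ∏ i, ∫ t in Set.Icc (a' i) (b' i), h α α' i (x i) t := by
    intro x
    have hrw : (fun y : EuclideanSpace ℝ (Fin d) =>
        ∑ α ∈ A, ∑ α' ∈ A', c α * c' α' *
          iteratedFDeriv ℝ (∑ i, (α i + α' i))
            (fun p : EuclideanSpace ℝ (Fin d) × EuclideanSpace ℝ (Fin d) =>
              ∏ i, K i (p.1 i) (p.2 i)) (x, y) (v α α'))
        = (fun y : EuclideanSpace ℝ (Fin d) =>
          ∑ α ∈ A, ∑ α' ∈ A', c α * c' α' * ∏ i, h α α' i (x i) (y i)) := by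
      funext y
      refine Finset.sum_congr rfl fun α _ => Finset.sum_congr rfl fun α' _ => ?_
      exact congrArg (fun r => c α * c' α' * r)
        (gram_pointwise K hK' α α' (v α α') (hv1 α α') (hv2 α α') x y)
    rw [hrw]
    have hintg : ∀ (α α' : Fin d → ℕ), IntegrableOn
        (fun y : EuclideanSpace ℝ (Fin d) => c α * c' α' * ∏ i, h α α' i (x i) (y i))
        (WithLp.ofLp ⁻¹' (Set.univ.pi fun i => Set.Icc (a' i) (b' i))) volume := by
      intro α α'
      refine ContinuousOn.integrableOn_compact ((PiLp.homeomorph 2 (fun _ : Fin d => ℝ)).isCompact_preimage.mpr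
        (isCompact_univ_pi fun i => isCompact_Icc)) ?_
      refine Continuous.continuousOn ?_
      refine continuous_const.mul ?_
      refine continuous_finset_prod _ fun i _ => ?_
      exact (hcont α α' i).comp (continuous_const.prodMk (PiLp.continuous_apply 2 (fun _ : Fin d => ℝ) i))
    rw [MeasureTheory.integral_finset_sum A fun α hα => MeasureTheory.integrable_finset_sum A'
      fun α' hα' => hintg α α']
    refine Finset.sum_congr rfl fun α _ => ?_
    rw [MeasureTheory.integral_finset_sum A' fun α' hα' => hintg α α']
    refine Finset.sum_congr rfl fun α' _ => ?_
    rw [MeasureTheory.integral_const_mul]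
    exact congrArg (fun r => c α * c' α' * r)
      (gram_box_integral (fun i t => h α α' i (x i) t) (fun i => Set.Icc (a' i) (b' i))
        fun i => measurableSet_Icc)
  rw [show (fun x : EuclideanSpace ℝ (Fin d) =>
      ∫ y in (WithLp.ofLp ⁻¹' (Set.univ.pi fun i => Set.Icc (a' i) (b' i)) : Set (EuclideanSpace ℝ (Fin d))),
        ∑ α ∈ A, ∑ α' ∈ A', c α * c' α' *
          iteratedFDeriv ℝ (∑ i, (α i + α' i))
            (fun p : EuclideanSpace ℝ (Fin d) × EuclideanSpace ℝ (Fin d) =>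
              ∏ i, K i (p.1 i) (p.2 i)) (x, y) (v α α'))
      = (fun x : EuclideanSpace ℝ (Fin d) => ∑ α ∈ A, ∑ α' ∈ A', c α * c' α' *
          ∏ i, ∫ t in Set.Icc (a' i) (b' i), h α α' i (x i) t) from funext hinner]
  have hintg2 : ∀ (α α' : Fin d → ℕ), IntegrableOn
      (fun x : EuclideanSpace ℝ (Fin d) => c α * c' α' *
        ∏ i, ∫ t in Set.Icc (a' i) (b' i), h α α' i (x i) t)
      (WithLp.ofLp ⁻¹' (Set.univ.pi fun i => Set.Icc (a i) (b i))) volume := by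
    intro α α'
    refine ContinuousOn.integrableOn_compact ((PiLp.homeomorph 2 (fun _ : Fin d => ℝ)).isCompact_preimage.mpr
      (isCompact_univ_pi fun i => isCompact_Icc)) ?_
    refine Continuous.continuousOn ?_
    refine continuous_const.mul ?_
    refine continuous_finset_prod _ fun i _ => ?_
    exact (hg α α' i).comp (PiLp.continuous_apply 2 (fun _ : Fin d => ℝ) i)
  rw [MeasureTheory.integral_finset_sum A fun α hα => MeasureTheory.integrable_finset_sum A'
    fun α' hα' => hintg2 α α']
  refine Finset.sum_congr rfl fun α _ => ?_
  rw [MeasureTheory.integral_finset_sum A' fun α' hα' => hintg2 α α']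
  refine Finset.sum_congr rfl fun α' _ => ?_
  rw [MeasureTheory.integral_const_mul]
  exact congrArg (fun r => c α * c' α' * r)
    (gram_box_integral (fun i s => ∫ t in Set.Icc (a' i) (b' i), h α α' i s t)
      (fun i => Set.Icc (a i) (b i)) fun i => measurableSet_Icc)
end

section
/- Let k ∈ ℕ, let u : ℝ → ℝ be ContDiff ℝ k, let a ≤ b be real numbers, let c₀, …, c_k ∈ ℝ, and suppose M ≥ 0 satisfies |(iteratedDeriv i u) x| ≤ M for all 0 ≤ i ≤ k and all x ∈ [a, b]. Then |∫_a^b (∑_{i=0}^{k} cᵢ · (iteratedDeriv i u) x) dx| ≤ (|c₀| · (b − a) + 2 · ∑_{i=1}^{k} |cᵢ|) · M. -/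
/-! By the fundamental theorem of calculus, the integral of `u⁽ⁱ⁺¹⁾` over `[a, b]` is
`u⁽ⁱ⁾ b - u⁽ⁱ⁾ a`, which is bounded by `2M` independently of the length of the interval;
only the zeroth-order term is estimated by `M (b - a)`. -/

open intervalIntegral

theorem norm_integral_le_of_norm_le_on_Icc {E : Type*} [NormedAddCommGroup E] [NormedSpace ℝ E]
    {f : ℝ → E} {a b M : ℝ} (hab : a ≤ b) (h : ∀ x ∈ Set.Icc a b, ‖f x‖ ≤ M) :
    ‖∫ x in a..b, f x‖ ≤ M * (b - a) := by
  have hIoc : ∀ x ∈ Set.uIoc a b, ‖f x‖ ≤ M := fun x hx =>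
    h x (Set.Ioc_subset_Icc_self (Set.uIoc_of_le hab ▸ hx))
  simpa only [abs_of_nonneg (sub_nonneg.2 hab)] using norm_integral_le_of_norm_le_const hIoc

section IteratedDeriv

variable {E : Type*} [NormedAddCommGroup E] [NormedSpace ℝ E] [CompleteSpace E]
  {n : ℕ} {u : ℝ → E}

theorem integral_iteratedDeriv_succ (hu : ContDiff ℝ (n + 1) u) (a b : ℝ) :
    ∫ x in a..b, iteratedDeriv (n + 1) u x = iteratedDeriv n u b - iteratedDeriv n u a := by
  have hdiff : Differentiable ℝ (iteratedDeriv n u) :=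
    hu.differentiable_iteratedDeriv n (by exact_mod_cast n.lt_succ_self)
  have hint : IntervalIntegrable (iteratedDeriv (n + 1) u) MeasureTheory.volume a b :=
    (hu.continuous_iteratedDeriv _ le_rfl).intervalIntegrable a b
  rw [iteratedDeriv_succ] at hint ⊢
  exact integral_deriv_eq_sub (fun x _ => hdiff x) hint

theorem norm_integral_iteratedDeriv_succ_le (hu : ContDiff ℝ (n + 1) u) {a b M : ℝ}
    (ha : ‖iteratedDeriv n u a‖ ≤ M) (hb : ‖iteratedDeriv n u b‖ ≤ M) :
    ‖∫ x in a..b, iteratedDeriv (n + 1) u x‖ ≤ 2 * M := by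
  rw [integral_iteratedDeriv_succ hu]
  linarith [norm_sub_le (iteratedDeriv n u b) (iteratedDeriv n u a)]

end IteratedDeriv

theorem fvm_one_dim_bounded_general (k : ℕ) (u : ℝ → ℝ) (hu : ContDiff ℝ k u)
    (a b : ℝ) (hab : a ≤ b) (c : Fin (k + 1) → ℝ) (M : ℝ)
    (hbound : ∀ i : Fin (k + 1), ∀ x ∈ Set.Icc a b, |iteratedDeriv i u x| ≤ M) :
    |∫ x in a..b, (∑ i : Fin (k + 1), c i * iteratedDeriv i u x)| ≤
      (|c 0| * (b - a) + 2 * ∑ i : Fin k, |c i.succ|) * M := by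
  have hcont (i : Fin (k + 1)) : Continuous (iteratedDeriv i u) :=
    hu.continuous_iteratedDeriv i (by exact_mod_cast i.is_le)
  rw [integral_finsetSum fun i _ => ((hcont i).intervalIntegrable a b).const_mul (c i),
    Fin.sum_univ_succ]
  simp only [integral_const_mul, Fin.val_zero, Fin.val_succ]
  have h0 : ‖∫ x in a..b, iteratedDeriv 0 u x‖ ≤ M * (b - a) :=
    norm_integral_le_of_norm_le_on_Icc hab fun x hx => by simpa using hbound 0 x hx
  have hsucc (i : Fin k) : ‖∫ x in a..b, iteratedDeriv (i + 1) u x‖ ≤ 2 * M :=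
    norm_integral_iteratedDeriv_succ_le (hu.of_le (by exact_mod_cast i.isLt))
      (by simpa using hbound i.castSucc a ⟨le_rfl, hab⟩)
      (by simpa using hbound i.castSucc b ⟨hab, le_rfl⟩)
  calc _ ≤ |c 0| * |∫ x in a..b, iteratedDeriv 0 u x|
          + ∑ i : Fin k, |c i.succ| * |∫ x in a..b, iteratedDeriv (i + 1) u x| := by
        grw [abs_add_le, Finset.abs_sum_le_sum_abs]
        simp only [abs_mul, le_rfl]
    _ ≤ |c 0| * (M * (b - a)) + ∑ i : Fin k, |c i.succ| * (2 * M) := by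
        gcongr with i
        exacts [h0, hsucc i]
    _ = (|c 0| * (b - a) + 2 * ∑ i : Fin k, |c i.succ|) * M := by
        rw [← Finset.sum_mul]
        ring

/-- Quantitative boundedness of the one-dimensional FVM operator
`L_{[a,b]}[u] = ∫_a^b ∑_{i=0}^k cᵢ u⁽ⁱ⁾(x) dx`. -/
theorem fvm_one_dim_bounded (k : ℕ) (u : ℝ → ℝ) (hu : ContDiff ℝ k u)
    (a b : ℝ) (hab : a ≤ b) (c : Fin (k + 1) → ℝ) (M : ℝ) (hM : 0 ≤ M)
    (hbound : ∀ i : Fin (k + 1), ∀ x ∈ Set.Icc a b, |iteratedDeriv i u x| ≤ M) :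
    |∫ x in a..b, (∑ i : Fin (k + 1), c i * iteratedDeriv i u x)| ≤
      (|c 0| * (b - a) + 2 * ∑ i : Fin k, |c i.succ|) * M :=
  fvm_one_dim_bounded_general k u hu a b hab c M hbound
end
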